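/- arXiv:math/0001009 — 8 statements merged into one kernel-verified Lean document; each statement's English description precedes it below -/
import Mathlib

section
/- Let X be a Polish space, let f_1,…,f_m be homeomorphisms of X, and let (L_i, R_i), 1 ≤ i ≤ m, be a system of m congruences on {1,…,r}. Suppose (a) there is a solution A''_1,…,A''_r of the system in X such that f_i witnesses congruence i for each i, and (b) there is a quasi-solution A'_1,…,A'_r of the system in X consisting of nonmeager sets with the property of Baire such that f_i witnesses the i-th quasi-congruence for each i. Then there is a solution A_1,…,A_r of the system in X consisting of nonmeager sets with the property of Baire such that f_i witnesses congruence i for each i. -/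
/-!
Remove from `X` the meagre set of points at which the quasi-solution `A'` fails to be a
solution, saturated under the countable group generated by the `f i`. What is left is a comeagre
set `D` with `f i '' D = D`. Take `A'` on `D` and the exact solution `A''` off `D`: since every
`f i` preserves `D` and its complement, the spliced family is an exact solution, and since it
agrees with `A'` on the comeagre set `D`, its pieces keep the property of Baire and stay
nonmeagre.
-/

/-- A set has the property of Baire iff its symmetric difference with some open set is meager. -/
def HasBaireProperty {X : Type*} [TopologicalSpace X] (A : Set X) : Prop :=
  ∃ U : Set X, IsOpen U ∧ IsMeagre (symmDiff A U)
open Set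

open Filter Function Topology

section Residual

variable {X : Type*} [TopologicalSpace X] {s t : Set X}

theorem isMeagre_symmDiff_iff_residualEq : IsMeagre (symmDiff s t) ↔ s =ᵇ t := by
  rw [IsMeagre, eventuallyEq_set, Filter.Eventually]
  congr!
  ext x
  simp only [mem_compl_iff, mem_symmDiff, mem_ofPred_eq]
  tauto

theorem IsMeagre.congr_residualEq (hs : IsMeagre s) (hst : s =ᵇ t) : IsMeagre t := by
  filter_upwards [hs, eventuallyEq_set.1 hst] with x hxs hx
  exact fun hxt => hxs (hx.2 hxt)

theorem hasBaireProperty_iff_baireMeasurableSet : HasBaireProperty s ↔ BaireMeasurableSet s := by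
  simp only [HasBaireProperty, isMeagre_symmDiff_iff_residualEq,
    BaireMeasurableSet.iff_residualEq_isOpen]

theorem HasBaireProperty.congr_residualEq (hs : HasBaireProperty s) (hst : s =ᵇ t) :
    HasBaireProperty t :=
  hasBaireProperty_iff_baireMeasurableSet.2 <|
    (hasBaireProperty_iff_baireMeasurableSet.1 hs).congr hst

theorem Set.ite_residualEq {D : Set X} (hD : D ∈ residual X) (s t : Set X) : D.ite s t =ᵇ s := by
  rw [eventuallyEq_set]
  filter_upwards [hD] with x hx
  simp [Set.ite, hx]

theorem Homeomorph.image_mem_residual (e : X ≃ₜ X) {D : Set X} (hD : D ∈ residual X) :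
    e '' D ∈ residual X := by
  rw [← e.symm.residual_map_eq] at hD
  rwa [e.image_eq_preimage_symm]

theorem exists_subset_mem_residual_forall_image_eq {ι : Type*} [Countable ι] (f : ι → X ≃ₜ X)
    {G : Set X} (hG : G ∈ residual X) : ∃ D ⊆ G, D ∈ residual X ∧ ∀ i, f i '' D = D := by
  -- `φ w` runs over the group generated by the `f i`, which is countable
  set φ := FreeGroup.lift f
  refine ⟨⋂ w, φ w '' G, ?_, countable_iInter_mem.2 fun w => (φ w).image_mem_residual hG,
    fun i => ?_⟩
  · refine (iInter_subset _ 1).trans ?_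
    rw [map_one]
    exact (image_id G).subset
  · have hφ : ∀ w, f i '' (φ w '' G) = φ (FreeGroup.of i * w) '' G := fun w => by
      rw [image_image, map_mul, FreeGroup.lift_apply_of]
      rfl
    simp only [image_iInter (f i).bijective, hφ]
    exact (Equiv.mulLeft (FreeGroup.of i)).surjective.iInter_comp fun w => φ w '' G

end Residual

theorem Set.biUnion_ite {α ι : Type*} (D : Set α) (B A : ι → Set α) (S : Set ι) :
    ⋃ k ∈ S, D.ite (B k) (A k) = D.ite (⋃ k ∈ S, B k) (⋃ k ∈ S, A k) := by
  ext x
  by_cases hx : x ∈ D <;> simp [Set.ite, hx]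

theorem Set.image_ite {α β : Type*} {D : Set α} {D' : Set β} {g : α → β} (hg : Injective g)
    (hD : g '' D = D') (s t : Set α) : g '' D.ite s t = D'.ite (g '' s) (g '' t) := by
  rw [Set.ite, image_union, image_inter hg, image_sdiff hg, hD, Set.ite]

section Congruences

variable {X ι κ : Type*} (f : ι → X → X) (L R : ι → Set κ)

def SolvesAt (A : κ → Set X) (x : X) : Prop :=
  (∃ k, x ∈ A k) ∧ (∀ k k', k ≠ k' → x ∈ A k → x ∉ A k') ∧
    ∀ i, (x ∈ f i '' ⋃ k ∈ L i, A k ↔ x ∈ ⋃ k ∈ R i, A k)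

theorem eventually_residual_solvesAt [TopologicalSpace X] [Countable ι] [Countable κ]
    {A : κ → Set X} (hqd : ∀ k k', k ≠ k' → IsMeagre (A k ∩ A k'))
    (hcover : (⋃ k, A k) ∈ residual X)
    (hwit : ∀ i, IsMeagre (symmDiff (f i '' ⋃ k ∈ L i, A k) (⋃ k ∈ R i, A k))) :
    ∀ᶠ x in residual X, SolvesAt f L R A x := by
  have hdisj : ∀ᶠ x in residual X, ∀ k k', k ≠ k' → x ∈ A k → x ∉ A k' := by
    refine eventually_countable_forall.2 fun k => eventually_countable_forall.2 fun k' => ?_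
    by_cases hk : k = k'
    · exact Eventually.of_forall fun _ h => absurd hk h
    · filter_upwards [hqd k k' hk] with x hx _ hxk hxk' using hx ⟨hxk, hxk'⟩
  have hwit' : ∀ᶠ x in residual X, ∀ i, (x ∈ f i '' ⋃ k ∈ L i, A k ↔ x ∈ ⋃ k ∈ R i, A k) :=
    eventually_countable_forall.2 fun i =>
      eventuallyEq_set.1 (isMeagre_symmDiff_iff_residualEq.1 (hwit i))
  filter_upwards [hcover, hdisj, hwit'] with x hx hxdisj hxwit
  exact ⟨mem_iUnion.1 hx, hxdisj, hxwit⟩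

variable {f L R} {D : Set X} {B A : κ → Set X}

theorem disjoint_ite_of_solvesAt (hB : ∀ x ∈ D, SolvesAt f L R B x)
    (hA : ∀ k k', k ≠ k' → Disjoint (A k) (A k')) {k k' : κ} (hk : k ≠ k') :
    Disjoint (D.ite (B k) (A k)) (D.ite (B k') (A k')) := by
  rw [disjoint_left]
  rintro x (⟨hxB, hxD⟩ | ⟨hxA, hxD⟩) (⟨hxB', hxD'⟩ | ⟨hxA', hxD'⟩)
  · exact (hB x hxD).2.1 k k' hk hxB hxB'
  · exact hxD' hxD
  · exact hxD hxD'
  · exact disjoint_left.1 (hA k k' hk) hxA hxA'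

theorem iUnion_ite_eq_univ_of_solvesAt (hB : ∀ x ∈ D, SolvesAt f L R B x)
    (hA : ⋃ k, A k = univ) : ⋃ k, D.ite (B k) (A k) = univ := by
  refine eq_univ_of_forall fun x => mem_iUnion.2 ?_
  by_cases hxD : x ∈ D
  · obtain ⟨k, hk⟩ := (hB x hxD).1
    exact ⟨k, Or.inl ⟨hk, hxD⟩⟩
  · obtain ⟨k, hk⟩ := mem_iUnion.1 (hA ▸ mem_univ x)
    exact ⟨k, Or.inr ⟨hk, hxD⟩⟩

theorem image_biUnion_ite_of_solvesAt (hf : ∀ i, Injective (f i)) (hD : ∀ i, f i '' D = D)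
    (hB : ∀ x ∈ D, SolvesAt f L R B x)
    (hA : ∀ i, f i '' (⋃ k ∈ L i, A k) = ⋃ k ∈ R i, A k) (i : ι) :
    f i '' (⋃ k ∈ L i, D.ite (B k) (A k)) = ⋃ k ∈ R i, D.ite (B k) (A k) := by
  have hBi : f i '' (⋃ k ∈ L i, B k) ∩ D = (⋃ k ∈ R i, B k) ∩ D := by
    ext x
    exact and_congr_left fun hx => (hB x hx).2.2 i
  rw [Set.biUnion_ite, Set.biUnion_ite, Set.image_ite (hf i) (hD i), hA, Set.ite, Set.ite, hBi]

end Congruences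

theorem stmt_2_general {X : Type*} [TopologicalSpace X]
    {r m : ℕ} (L R : Fin m → Set (Fin r)) (f : Fin m → X ≃ₜ X)
    (A'' : Fin r → Set X)
    (hdisj'' : ∀ k k', k ≠ k' → Disjoint (A'' k) (A'' k'))
    (hcover'' : ⋃ k, A'' k = univ)
    (hwit'' : ∀ i, f i '' (⋃ k ∈ L i, A'' k) = ⋃ k ∈ R i, A'' k)
    (A' : Fin r → Set X)
    (hpb' : ∀ k, HasBaireProperty (A' k)) (hnm' : ∀ k, ¬ IsMeagre (A' k))
    (hqd' : ∀ k k', k ≠ k' → IsMeagre (A' k ∩ A' k'))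
    (hcover' : (⋃ k, A' k) ∈ residual X)
    (hwit' : ∀ i, IsMeagre (symmDiff (f i '' ⋃ k ∈ L i, A' k) (⋃ k ∈ R i, A' k))) :
    ∃ A : Fin r → Set X,
      (∀ k, HasBaireProperty (A k) ∧ ¬ IsMeagre (A k)) ∧
      (∀ k k', k ≠ k' → Disjoint (A k) (A k')) ∧
      (⋃ k, A k) = univ ∧
      (∀ i, f i '' (⋃ k ∈ L i, A k) = ⋃ k ∈ R i, A k) := by
  obtain ⟨D, hDgood, hD, hfD⟩ := exists_subset_mem_residual_forall_image_eq f
    (eventually_residual_solvesAt (fun i => f i) L R hqd' hcover' hwit')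
  refine ⟨fun k => D.ite (A' k) (A'' k), fun k => ?_,
    fun k k' => disjoint_ite_of_solvesAt hDgood hdisj'',
    iUnion_ite_eq_univ_of_solvesAt hDgood hcover'',
    image_biUnion_ite_of_solvesAt (fun i => (f i).injective) hfD hDgood hwit''⟩
  have hA' : D.ite (A' k) (A'' k) =ᵇ A' k := Set.ite_residualEq hD _ _
  exact ⟨(hpb' k).congr_residualEq hA'.symm, fun h => hnm' k (h.congr_residualEq hA')⟩

/-- **Lemma 2.3.** Let `X` be a Polish space, `f 1, …, f m` homeomorphisms of `X`, and
`(L i, R i)` a system of `m` congruences on `{1,…,r}`.  If the system has a solution in `X`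
with `f i` witnessing congruence `i`, and a quasi-solution by nonmeager sets with the property
of Baire with `f i` witnessing quasi-congruence `i`, then it has a solution by nonmeager sets
with the property of Baire with `f i` witnessing congruence `i`. -/
theorem stmt_2 {X : Type*} [TopologicalSpace X] [PolishSpace X]
    {r m : ℕ} (L R : Fin m → Set (Fin r)) (f : Fin m → X ≃ₜ X)
    (A'' : Fin r → Set X)
    (hdisj'' : ∀ k k', k ≠ k' → Disjoint (A'' k) (A'' k'))
    (hcover'' : ⋃ k, A'' k = univ)
    (hwit'' : ∀ i, f i '' (⋃ k ∈ L i, A'' k) = ⋃ k ∈ R i, A'' k)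
    (A' : Fin r → Set X)
    (hpb' : ∀ k, HasBaireProperty (A' k)) (hnm' : ∀ k, ¬ IsMeagre (A' k))
    (hqd' : ∀ k k', k ≠ k' → IsMeagre (A' k ∩ A' k'))
    (hcover' : (⋃ k, A' k) ∈ residual X)
    (hwit' : ∀ i, IsMeagre (symmDiff (f i '' ⋃ k ∈ L i, A' k) (⋃ k ∈ R i, A' k))) :
    ∃ A : Fin r → Set X,
      (∀ k, HasBaireProperty (A k) ∧ ¬ IsMeagre (A k)) ∧
      (∀ k k', k ≠ k' → Disjoint (A k) (A k')) ∧
      (⋃ k, A k) = univ ∧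
      (∀ i, f i '' (⋃ k ∈ L i, A k) = ⋃ k ∈ R i, A k) :=
  stmt_2_general L R f A'' hdisj'' hcover'' hwit'' A' hpb' hnm' hqd' hcover' hwit'
end

section
/- Let B and C be subsets of S² with the property of Baire such that B ∩ C is meager, and suppose there is an isometry σ of S² such that σ(B ∪ C) \ B is meager (i.e., B ∪ C is quasi-congruent to a subset of B). Then C is meager. -/
noncomputable section

/-- Euclidean 3-space. -/
abbrev E3 := EuclideanSpace ℝ (Fin 3)

/-- The unit sphere `S²` in `ℝ³`. -/
def S2 : Set E3 := Metric.sphere 0 1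

/-- The self-map of `S²` obtained by restricting a linear isometry equivalence of `ℝ³`
(an element of O(3)); such restrictions are exactly the isometries of `S²`. -/
def sphereMap (f : E3 ≃ₗᵢ[ℝ] E3) (x : S2) : S2 :=
  ⟨f x.1, by
    have hx : ‖(x : E3)‖ = 1 := by simpa [S2, mem_sphere_zero_iff_norm] using x.2
    simp [S2, mem_sphere_zero_iff_norm, f.norm_map, hx]⟩

/-- An element of O(3) is a rotation iff it has determinant 1 (i.e. lies in SO(3)). -/
def IsRotation (f : E3 ≃ₗᵢ[ℝ] E3) : Prop :=
  LinearMap.det (f.toLinearEquiv : E3 →ₗ[ℝ] E3) = 1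

end
open Set

/-!
Let `f` be the isometry of `S²` induced by `σ`. From `f(B) ⊆ B` modulo meagre sets one gets
`fⁿ(B) ⊆ B`, hence `fⁿ⁺¹(C) ⊆ fⁿ(B) ⊆ B`, and so `C ∩ fⁿ⁺¹(C) ⊆ C ∩ B` modulo meagre sets for
every `n`. If `C` were not meagre, it would agree up to a meagre set with a nonempty open set
`U`. An isometry of a compact metric space is recurrent: some `fᵏ(x)`, `k ≥ 1`, returns to `U`
for `x ∈ U`. Then `U ∩ fᵏ(U)` is a nonempty open set contained in `C ∩ fᵏ(C)` up to a meagre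
set, which is impossible in the Baire space `S²`.
-/

theorem Homeomorph.coe_pow {X : Type*} [TopologicalSpace X] (f : X ≃ₜ X) :
    ∀ n : ℕ, ⇑(f ^ n) = f^[n]
  | 0 => rfl
  | n + 1 => by rw [pow_succ, Function.iterate_succ, ← Homeomorph.coe_pow f n]; rfl

theorem Isometry.iterate {X : Type*} [PseudoEMetricSpace X] {f : X → X} (hf : Isometry f) :
    ∀ n : ℕ, Isometry f^[n]
  | 0 => isometry_id
  | n + 1 => (hf.iterate n).comp hf

theorem Isometry.exists_pos_dist_iterate_lt {X : Type*} [PseudoMetricSpace X] [CompactSpace X]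
    {f : X → X} (hf : Isometry f) (x : X) {ε : ℝ} (hε : 0 < ε) :
    ∃ k, 0 < k ∧ dist (f^[k] x) x < ε := by
  obtain ⟨_, φ, hφ, hlim⟩ := CompactSpace.tendsto_subseq fun n ↦ f^[n] x
  have hcauchy : CauchySeq fun n ↦ f^[φ n] x := hlim.cauchySeq
  obtain ⟨N, hN⟩ := Metric.cauchySeq_iff'.1 hcauchy ε hε
  obtain ⟨k, hk⟩ := Nat.exists_eq_add_of_lt (hφ (Nat.lt_succ_self N))
  refine ⟨k + 1, k.succ_pos, ?_⟩
  have h : dist (f^[φ (N + 1)] x) (f^[φ N] x) < ε := hN (N + 1) N.le_succ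
  rwa [hk, add_assoc, Function.iterate_add_apply, (hf.iterate _).dist_eq] at h

section QuasiInvariance

variable {X : Type*} [TopologicalSpace X] (f : X ≃ₜ X)

theorem Homeomorph.image_pow_succ_diff_subset (n : ℕ) (S B : Set X) :
    (f ^ (n + 1)) '' S \ B ⊆ (f ^ n) '' (f '' S \ B) ∪ ((f ^ n) '' B \ B) := by
  rintro _ ⟨⟨y, hy, rfl⟩, hyB⟩
  by_cases hfy : f y ∈ B
  · exact Or.inr ⟨⟨f y, hfy, rfl⟩, hyB⟩
  · exact Or.inl ⟨f y, ⟨mem_image_of_mem f hy, hfy⟩, rfl⟩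

variable {f} {B C : Set X}

theorem Homeomorph.isMeagre_image_pow_diff (hB : IsMeagre (f '' B \ B)) :
    ∀ n : ℕ, IsMeagre ((f ^ n) '' B \ B)
  | 0 => by rw [Homeomorph.coe_pow]; simp [IsMeagre.empty]
  | n + 1 => (((f ^ n).isInducing.isMeagre_image hB).union (isMeagre_image_pow_diff hB n)).mono
      (f.image_pow_succ_diff_subset n B B)

theorem Homeomorph.isMeagre_inter_image_pow_succ (hBC : IsMeagre (B ∩ C))
    (h : IsMeagre (f '' (B ∪ C) \ B)) (n : ℕ) : IsMeagre (C ∩ (f ^ (n + 1)) '' C) := by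
  have hB := h.mono (sdiff_subset_sdiff_left (image_mono subset_union_left))
  have hC := h.mono (sdiff_subset_sdiff_left (image_mono subset_union_right))
  have hCB : IsMeagre ((f ^ (n + 1)) '' C \ B) :=
    (((f ^ n).isInducing.isMeagre_image hC).union (isMeagre_image_pow_diff hB n)).mono
      (f.image_pow_succ_diff_subset n C B)
  refine (hBC.union hCB).mono fun x ⟨hxC, hx⟩ ↦ ?_
  by_cases hxB : x ∈ B
  · exact Or.inl ⟨hxB, hxC⟩
  · exact Or.inr ⟨hx, hxB⟩

end QuasiInvariance

theorem isMeagre_of_isMeagre_inter_image_pow {X : Type*} [PseudoMetricSpace X] [CompactSpace X]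
    (f : X ≃ₜ X) (hf : Isometry f) {C : Set X} (hC : HasBaireProperty C)
    (hrec : ∀ n : ℕ, IsMeagre (C ∩ (f ^ (n + 1)) '' C)) : IsMeagre C := by
  obtain ⟨U, hU, hCU⟩ := hC
  have hUC : IsMeagre (U \ C) := hCU.mono subset_union_right
  suffices U = ∅ by rwa [this, ← bot_eq_empty, symmDiff_bot] at hCU
  by_contra hne
  obtain ⟨x, hx⟩ := nonempty_iff_ne_empty.2 hne
  obtain ⟨r, hr, hball⟩ := Metric.isOpen_iff.1 hU x hx
  obtain ⟨k, hk, hdist⟩ := hf.exists_pos_dist_iterate_lt x hr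
  obtain ⟨n, rfl⟩ := Nat.exists_eq_succ_of_ne_zero hk.ne'
  set g := f ^ (n + 1)
  have hgx : g x ∈ U := hball (by rwa [Metric.mem_ball, Homeomorph.coe_pow])
  have hmeagre : IsMeagre (U ∩ g '' U) := by
    refine ((hrec n).union (hUC.union (g.isInducing.isMeagre_image hUC))).mono ?_
    rintro _ ⟨hyU, u, huU, rfl⟩
    by_cases hgu : g u ∈ C
    · by_cases hu : u ∈ C
      · exact Or.inl ⟨hgu, u, hu, rfl⟩
      · exact Or.inr (Or.inr ⟨u, ⟨huU, hu⟩, rfl⟩)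
    · exact Or.inr (Or.inl ⟨hyU, hgu⟩)
  exact not_isMeagre_of_isOpen (hU.inter (g.isOpenMap U hU)) ⟨g x, hgx, x, hx, rfl⟩ hmeagre

instance : CompactSpace S2 := Metric.sphere.compactSpace 0 1

noncomputable def sphereIsometryEquiv (σ : E3 ≃ₗᵢ[ℝ] E3) : S2 ≃ᵢ S2 where
  toFun := sphereMap σ
  invFun := sphereMap σ.symm
  left_inv x := Subtype.ext (σ.symm_apply_apply x)
  right_inv x := Subtype.ext (σ.apply_symm_apply x)
  isometry_toFun := Isometry.of_dist_eq fun x y ↦ σ.dist_map x y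

theorem stmt_5_general (B C : Set S2)
    (hC : HasBaireProperty C)
    (hqd : IsMeagre (B ∩ C))
    (hsub : ∃ σ : E3 ≃ₗᵢ[ℝ] E3, IsMeagre (sphereMap σ '' (B ∪ C) \ B)) :
    IsMeagre C := by
  obtain ⟨σ, hσ⟩ := hsub
  let f := (sphereIsometryEquiv σ).toHomeomorph
  exact isMeagre_of_isMeagre_inter_image_pow f (sphereIsometryEquiv σ).isometry hC
    (f.isMeagre_inter_image_pow_succ hqd hσ)

/-- **Proposition 3.1.** If `B` and `C` are quasi-disjoint subsets of `S²` with the property of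
Baire and some isometry `σ` of `S²` maps `B ∪ C` into `B` modulo a meager set, then `C` is
meager. -/
theorem stmt_5 (B C : Set S2)
    (hB : HasBaireProperty B) (hC : HasBaireProperty C)
    (hqd : IsMeagre (B ∩ C))
    (hsub : ∃ σ : E3 ≃ₗᵢ[ℝ] E3, IsMeagre (sphereMap σ '' (B ∪ C) \ B)) :
    IsMeagre C :=
  stmt_5_general B C hC hqd hsub
end

section
/- Let A ⊆ S² be an open set and let ρ be a rotation of S² of infinite order about an axis ℓ. If ρ(A) = A, then τ(A) = A for every rotation τ of S² about the axis ℓ. -/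
/-- `ℓ` is a line through the origin in `ℝ³`. -/
def IsLine (ℓ : Submodule ℝ E3) : Prop := Module.finrank ℝ ℓ = 1

/-- `f` fixes the line `ℓ` pointwise, i.e. `f` is "about the axis `ℓ`". -/
def FixesAxis (f : E3 ≃ₗᵢ[ℝ] E3) (ℓ : Submodule ℝ E3) : Prop := ∀ v ∈ ℓ, f v = v
open Set

open Pointwise

open MulAction in
theorem MonoidHom.smul_set_eq_of_dense_comap_stabilizer {G M X : Type*} [Group G]
    [TopologicalSpace G] [IsTopologicalGroup G] [Group M] [MulAction M X] [TopologicalSpace X]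
    (r : G →* M) (hr : ∀ x : X, Continuous fun g => r g • x) {A : Set X} (hA : IsOpen A)
    (hdense : Dense ((stabilizer M A).comap r : Set G)) (g : G) : r g • A = A := by
  have hsub : ∀ g, r g • A ⊆ A := by
    rintro g _ ⟨x, hx, rfl⟩
    have hU : IsOpen {h : G | r (h⁻¹ * g) • x ∈ A} :=
      hA.preimage ((hr x).comp (continuous_inv.mul continuous_const))
    obtain ⟨h, hhU, hh⟩ := hdense.inter_open_nonempty _ hU ⟨g, by simpa using hx⟩
    have hgx : r g • x = r h • r (h⁻¹ * g) • x := by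
      rw [← mul_smul, ← map_mul, mul_inv_cancel_left]
    change r g • x ∈ A
    rw [hgx, ← mem_stabilizer_iff.1 hh]
    exact Set.smul_mem_smul_set hhU
  refine (hsub g).antisymm ?_
  rw [Set.subset_smul_set_iff, ← map_inv]
  exact hsub g⁻¹

namespace Submodule

section Extension

variable {E : Type*} [NormedAddCommGroup E] [InnerProductSpace ℝ E]
  {K : Submodule ℝ E} [K.HasOrthogonalProjection]

omit [K.HasOrthogonalProjection] in
theorem norm_add_eq_of_mem_orthogonal {v : E} (hv : v ∈ K) {w w' : E} (hw : w ∈ Kᗮ)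
    (hw' : w' ∈ Kᗮ) (h : ‖w‖ = ‖w'‖) : ‖v + w‖ = ‖v + w'‖ := by
  have hsq : ‖v + w‖ ^ 2 = ‖v + w'‖ ^ 2 := by
    rw [sq, sq, norm_add_sq_eq_norm_sq_add_norm_sq_real (K.inner_right_of_mem_orthogonal hv hw),
      norm_add_sq_eq_norm_sq_add_norm_sq_real (K.inner_right_of_mem_orthogonal hv hw'), h]
  exact (sq_eq_sq₀ (norm_nonneg _) (norm_nonneg _)).1 hsq

variable (K) in
/-- The isometry of `E` acting as `ψ` on `Kᗮ` and as the identity on `K`. -/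
noncomputable def extendOrthogonal (ψ : Kᗮ ≃ₗᵢ[ℝ] Kᗮ) : E ≃ₗᵢ[ℝ] E where
  toLinearEquiv :=
    ((K.prodEquivOfIsCompl Kᗮ K.isCompl_orthogonal).symm.trans
      ((LinearEquiv.refl ℝ K).prodCongr ψ.toLinearEquiv)).trans
      (K.prodEquivOfIsCompl Kᗮ K.isCompl_orthogonal)
  norm_map' x := by
    obtain ⟨⟨v, w⟩, rfl⟩ := (K.prodEquivOfIsCompl Kᗮ K.isCompl_orthogonal).surjective x
    simp only [LinearEquiv.trans_apply, LinearEquiv.symm_apply_apply]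
    exact norm_add_eq_of_mem_orthogonal v.2 (ψ w).2 w.2 (ψ.norm_map w)

theorem extendOrthogonal_apply_add (ψ : Kᗮ ≃ₗᵢ[ℝ] Kᗮ) {v : E} (hv : v ∈ K) (w : Kᗮ) :
    K.extendOrthogonal ψ (v + w) = v + ψ w := by
  have hvw : v + (w : E) = K.prodEquivOfIsCompl Kᗮ K.isCompl_orthogonal (⟨v, hv⟩, w) := rfl
  rw [hvw]
  simp only [extendOrthogonal, LinearIsometryEquiv.coe_mk, LinearEquiv.trans_apply,
    LinearEquiv.symm_apply_apply]
  rfl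

theorem linearIsometryEquiv_ext_of_orthogonal {f g : E ≃ₗᵢ[ℝ] E}
    (h : ∀ v ∈ K, ∀ w : Kᗮ, f (v + w) = g (v + w)) : f = g := by
  ext x
  obtain ⟨v, hv, w, hw, rfl⟩ := K.exists_add_mem_mem_orthogonal x
  exact h v hv ⟨w, hw⟩

theorem extendOrthogonal_one : K.extendOrthogonal 1 = 1 :=
  linearIsometryEquiv_ext_of_orthogonal fun v hv w => by
    rw [extendOrthogonal_apply_add _ hv]; rfl

theorem extendOrthogonal_mul (ψ₁ ψ₂ : Kᗮ ≃ₗᵢ[ℝ] Kᗮ) :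
    K.extendOrthogonal (ψ₁ * ψ₂) = K.extendOrthogonal ψ₁ * K.extendOrthogonal ψ₂ :=
  linearIsometryEquiv_ext_of_orthogonal fun v hv w => by
    rw [LinearIsometryEquiv.coe_mul, Function.comp_apply, extendOrthogonal_apply_add _ hv,
      extendOrthogonal_apply_add _ hv, extendOrthogonal_apply_add _ hv]
    rfl

theorem det_extendOrthogonal [FiniteDimensional ℝ E] (ψ : Kᗮ ≃ₗᵢ[ℝ] Kᗮ) :
    LinearMap.det ((K.extendOrthogonal ψ).toLinearEquiv : E →ₗ[ℝ] E) =
      LinearMap.det (ψ.toLinearEquiv : Kᗮ →ₗ[ℝ] Kᗮ) := by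
  change LinearMap.det ((K.prodEquivOfIsCompl Kᗮ K.isCompl_orthogonal : K × Kᗮ →ₗ[ℝ] E) ∘ₗ
    (LinearMap.id.prodMap (ψ.toLinearEquiv : Kᗮ →ₗ[ℝ] Kᗮ)) ∘ₗ
    ((K.prodEquivOfIsCompl Kᗮ K.isCompl_orthogonal).symm : E →ₗ[ℝ] K × Kᗮ)) = _
  rw [LinearMap.det_conj, LinearMap.det_prodMap, LinearMap.det_id, one_mul]

omit [K.HasOrthogonalProjection] in
theorem map_orthogonal_of_forall_apply_eq {f : E ≃ₗᵢ[ℝ] E} (hf : ∀ v ∈ K, f v = v) :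
    Kᗮ.map (f.toLinearEquiv : E →ₗ[ℝ] E) = Kᗮ := by
  have hK : K.map (f.toLinearEquiv : E →ₗ[ℝ] E) = K := by
    ext x
    constructor
    · rintro ⟨y, hy, rfl⟩
      simpa [hf y hy] using hy
    · exact fun hx => ⟨x, hx, hf x hx⟩
  rw [map_orthogonal_equiv, hK]

noncomputable def restrictOrthogonal (f : E ≃ₗᵢ[ℝ] E) (hf : ∀ v ∈ K, f v = v) :
    Kᗮ ≃ₗᵢ[ℝ] Kᗮ :=
  (f.submoduleMap Kᗮ).trans (.ofEq _ _ (map_orthogonal_of_forall_apply_eq hf))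

theorem extendOrthogonal_restrictOrthogonal {f : E ≃ₗᵢ[ℝ] E} (hf : ∀ v ∈ K, f v = v) :
    K.extendOrthogonal (restrictOrthogonal f hf) = f :=
  linearIsometryEquiv_ext_of_orthogonal fun v hv w => by
    rw [extendOrthogonal_apply_add _ hv, map_add, hf v hv]
    rfl

end Extension

section Rotation

variable {E : Type*} [NormedAddCommGroup E] [InnerProductSpace ℝ E] [FiniteDimensional ℝ E]
  {K : Submodule ℝ E} [Fact (Module.finrank ℝ Kᗮ = 2)]

/-- Rotation about the codimension-two subspace `K`, the angle measured with respect to the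
orientation `o` of `Kᗮ`; angles enter multiplicatively so that this is a group homomorphism. -/
noncomputable def rotationAbout (o : Orientation ℝ Kᗮ (Fin 2)) :
    Multiplicative Real.Angle →* (E ≃ₗᵢ[ℝ] E) where
  toFun θ := K.extendOrthogonal (o.rotation θ.toAdd)
  map_one' := by
    rw [toAdd_one, o.rotation_zero]
    exact extendOrthogonal_one
  map_mul' θ₁ θ₂ := by
    rw [← extendOrthogonal_mul]
    congr 1
    refine LinearIsometryEquiv.ext fun x => ?_
    rw [toAdd_mul, LinearIsometryEquiv.coe_mul, Function.comp_apply, o.rotation_rotation]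

theorem rotationAbout_apply_add (o : Orientation ℝ Kᗮ (Fin 2)) (θ : Real.Angle) {v : E}
    (hv : v ∈ K) (w : Kᗮ) :
    rotationAbout o (.ofAdd θ) (v + w) = v + o.rotation θ w :=
  extendOrthogonal_apply_add _ hv w

theorem continuous_rotationAbout_apply (o : Orientation ℝ Kᗮ (Fin 2)) (x : E) :
    Continuous fun θ => rotationAbout o θ x := by
  obtain ⟨v, hv, w, hw, rfl⟩ := K.exists_add_mem_mem_orthogonal x
  have h : (fun θ : Real.Angle => rotationAbout o (.ofAdd θ) (v + w)) =
      fun θ : Real.Angle => v + (θ.cos • w + θ.sin • (o.rightAngleRotation ⟨w, hw⟩ : E)) := by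
    ext θ
    rw [rotationAbout_apply_add o θ hv ⟨w, hw⟩, o.rotation_apply]
    rfl
  change Continuous fun θ : Real.Angle => rotationAbout o (.ofAdd θ) (v + w)
  rw [h]
  exact continuous_const.add ((Real.Angle.continuous_cos.smul continuous_const).add
    (Real.Angle.continuous_sin.smul continuous_const))

theorem exists_eq_rotationAbout (o : Orientation ℝ Kᗮ (Fin 2)) {f : E ≃ₗᵢ[ℝ] E}
    (hf : ∀ v ∈ K, f v = v) (hdet : LinearMap.det (f.toLinearEquiv : E →ₗ[ℝ] E) = 1) :
    ∃ θ, f = rotationAbout o θ := by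
  obtain ⟨θ, hθ⟩ := o.exists_linearIsometryEquiv_eq_of_det_pos (f := restrictOrthogonal f hf)
    (by rw [← det_extendOrthogonal, extendOrthogonal_restrictOrthogonal, hdet]; exact one_pos)
  refine ⟨.ofAdd θ, ?_⟩
  rw [← extendOrthogonal_restrictOrthogonal hf, hθ]
  rfl

end Rotation

end Submodule

theorem Real.Angle.denseRange_zsmul {θ : Real.Angle} (hθ : ¬IsOfFinAddOrder θ) :
    DenseRange (· • θ : ℤ → Real.Angle) :=
  have : Fact (0 < 2 * Real.pi) := ⟨Real.two_pi_pos⟩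
  (AddCircle.denseRange_zsmul_iff (p := 2 * Real.pi)).2 (addOrderOf_eq_zero_iff.2 hθ)

noncomputable instance : MulAction (E3 ≃ₗᵢ[ℝ] E3) S2 where
  smul := sphereMap
  one_smul _ := rfl
  mul_smul _ _ _ := rfl

theorem finrank_orthogonal_of_isLine {ℓ : Submodule ℝ E3} (hℓ : IsLine ℓ) :
    Module.finrank ℝ ℓᗮ = 2 :=
  Submodule.finrank_add_finrank_orthogonal' (by rw [hℓ, finrank_euclideanSpace_fin])

/-- **Lemma 3.2 (invariant case).** If an open subset `A` of `S²` is invariant under a rotation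
`ρ` of infinite order about an axis `ℓ`, then `A` is invariant under every rotation about `ℓ`. -/
theorem stmt_6 (A : Set S2) (hA : IsOpen A)
    (ρ : E3 ≃ₗᵢ[ℝ] E3) (hρrot : IsRotation ρ)
    (ℓ : Submodule ℝ E3) (hline : IsLine ℓ) (haxis : FixesAxis ρ ℓ)
    (hord : ¬ IsOfFinOrder ρ)
    (hinv : sphereMap ρ '' A = A) :
    ∀ τ : E3 ≃ₗᵢ[ℝ] E3, IsRotation τ → FixesAxis τ ℓ → sphereMap τ '' A = A := by
  intro τ hτrot hτaxis
  have : Fact (Module.finrank ℝ ℓᗮ = 2) := ⟨finrank_orthogonal_of_isLine hline⟩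
  let o : Orientation ℝ ℓᗮ (Fin 2) := (Module.finBasisOfFinrankEq ℝ ℓᗮ this.out).orientation
  obtain ⟨θ, rfl⟩ := Submodule.exists_eq_rotationAbout o haxis hρrot
  obtain ⟨φ, rfl⟩ := Submodule.exists_eq_rotationAbout o hτaxis hτrot
  have hθ : ¬IsOfFinAddOrder θ.toAdd := fun h =>
    hord ((Submodule.rotationAbout o).isOfFinOrder
      ((isOfFinOrder_ofAdd_iff (x := θ.toAdd)).2 h))
  refine (Submodule.rotationAbout o).smul_set_eq_of_dense_comap_stabilizer
    (fun x : S2 => (Submodule.continuous_rotationAbout_apply o x).subtype_mk _) hA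
    (Dense.mono ?_ (Real.Angle.denseRange_zsmul hθ)) φ
  have hρA : Submodule.rotationAbout o θ • A = A := hinv
  rintro _ ⟨n, rfl⟩
  exact Subgroup.zpow_mem (Subgroup.comap _ _) (MulAction.mem_stabilizer_iff.2 hρA) n
end

section
/- Let G be a group of rotations of S² which is free as an abstract group. If a system of m congruences (L_i, R_i), 1 ≤ i ≤ m, on {1,…,r} has a quasi-solution in S² consisting of open sets, with all witnessing maps belonging to G, then the system is weak. -/
open Set

/-- Congruences deducible from a set of congruence pairs on `{1,…,r}` (encoded as `Fin r`):
closure under symmetry, complementation and transitivity. -/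
inductive CongDed {r : ℕ} (S : Set (Set (Fin r) × Set (Fin r))) :
    Set (Fin r) → Set (Fin r) → Prop
  | base {A B : Set (Fin r)} : (A, B) ∈ S → CongDed S A B
  | symm {A B : Set (Fin r)} : CongDed S A B → CongDed S B A
  | compl {A B : Set (Fin r)} : CongDed S A B → CongDed S Aᶜ Bᶜ
  | trans {A B C : Set (Fin r)} : CongDed S A B → CongDed S B C → CongDed S A C

/-- The system of congruences `(L i, R i)` is weak: no congruence between a set and its
complement is deducible from it. -/
def SysWeak {r m : ℕ} (L R : Fin m → Set (Fin r)) : Prop :=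
  ∀ A : Set (Fin r), ¬ CongDed {p | ∃ i, p = (L i, R i)} A Aᶜ

/-- The system is nonredundant: no congruence of the system is deducible from the system with
that congruence removed, and there is no identity congruence. -/
def SysNonredundant {r m : ℕ} (L R : Fin m → Set (Fin r)) : Prop :=
  (∀ i, ¬ CongDed {p | ∃ j, j ≠ i ∧ p = (L j, R j)} (L i) (R i)) ∧ ∀ i, L i ≠ R i

/-- Subcongruences deducible from the system. -/
inductive SubCong {r m : ℕ} (L R : Fin m → Set (Fin r)) :
    Set (Fin r) → Set (Fin r) → Prop
  | subset {A B : Set (Fin r)} : A ⊆ B → SubCong L R A B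
  | trans {A B C : Set (Fin r)} : SubCong L R A B → SubCong L R B C → SubCong L R A C
  | lr (i : Fin m) : SubCong L R (L i) (R i)
  | rl (i : Fin m) : SubCong L R (R i) (L i)
  | lrc (i : Fin m) : SubCong L R (L i)ᶜ (R i)ᶜ
  | rlc (i : Fin m) : SubCong L R (R i)ᶜ (L i)ᶜ

/-- The system is consistent: there is no deducible subcongruence `L ⪯ R` with `R` a proper
subset of `L`. -/
def SysConsistent {r m : ℕ} (L R : Fin m → Set (Fin r)) : Prop :=
  ∀ A B : Set (Fin r), SubCong L R A B → ¬ B ⊂ A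

/-- All congruences of the system are proper. -/
def SysProper {r m : ℕ} (L R : Fin m → Set (Fin r)) : Prop :=
  ∀ i, (L i).Nonempty ∧ L i ≠ univ ∧ (R i).Nonempty ∧ R i ≠ univ
/-!
Deducible congruences remain quasi-congruences with witnesses in `G`: symmetry,
complementation and transitivity all respect equality modulo meagre sets, complementation
because the `A k` partition `S²` up to a meagre set. So if `(P, Pᶜ)` were deducible, some
`σ ∈ G` would map the open set `V = ⋃_{k ∈ P} A k` onto `Vᶜ` up to a meagre set. By Baire,
`σ V` is disjoint from `V` and `σ²` fixes the regular open set `W = int (cl V)`. As `G` is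
free, `σ = 1` or `σ` has infinite order, and then `σ` turns every circle about its axis by an
angle that is not a rational multiple of `π`; either way `σ x` is a limit of the points
`σ^(2n) x ∈ W` for `x ∈ V`. But `σ x ∈ σ W`, which is open and disjoint from `W`.
-/

open Filter Topology Module

section QuasiCongruence

variable {X Y : Type*} [TopologicalSpace X] [TopologicalSpace Y]

theorem isMeagre_symmDiff_iff {s t : Set X} : IsMeagre (symmDiff s t) ↔ s =ᵇ t := by
  rw [IsMeagre, eventuallyEq_set, Filter.Eventually]
  congr! 1
  ext x
  by_cases x ∈ s <;> by_cases x ∈ t <;> simp [*]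

theorem Homeomorph.image_residualEq (h : X ≃ₜ Y) {s t : Set X} (hst : s =ᵇ t) :
    h '' s =ᵇ h '' t := by
  simp only [h.image_eq_preimage_symm]
  exact hst.comp_tendsto (Homeomorph.residual_map_eq h.symm).le

theorem biUnion_compl_residualEq {ι : Type*} [Countable ι] {A : ι → Set X}
    (hqd : ∀ k k', k ≠ k' → IsMeagre (A k ∩ A k')) (hcover : (⋃ k, A k) ∈ residual X)
    (P : Set ι) : (⋃ k ∈ Pᶜ, A k) =ᵇ ((⋃ k ∈ P, A k)ᶜ : Set X) := by
  have hdisj : ∀ᵇ x, ∀ k k', k ≠ k' → x ∉ A k ∩ A k' := by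
    simp only [eventually_countable_forall]
    exact hqd
  refine eventuallyEq_set.2 ?_
  filter_upwards [hcover, hdisj] with x hx hx'
  obtain ⟨k, hk⟩ := mem_iUnion.1 hx
  simp only [mem_compl_iff, mem_iUnion₂, not_exists]
  constructor
  · rintro ⟨j, hj, hxj⟩ i hi hxi
    exact hx' i j (by rintro rfl; exact hj hi) ⟨hxi, hxj⟩
  · exact fun h => ⟨k, fun hkP => h k hkP hk, hk⟩

theorem CongDed.exists_image_residualEq {r : ℕ} {S : Set (Set (Fin r) × Set (Fin r))}
    {H : Subgroup (X ≃ₜ X)} {A : Fin r → Set X}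
    (hqd : ∀ k k', k ≠ k' → IsMeagre (A k ∩ A k')) (hcover : (⋃ k, A k) ∈ residual X)
    (hS : ∀ p ∈ S, ∃ h ∈ H, h '' (⋃ k ∈ p.1, A k) =ᵇ ⋃ k ∈ p.2, A k)
    {P Q : Set (Fin r)} (hPQ : CongDed S P Q) :
    ∃ h ∈ H, h '' (⋃ k ∈ P, A k) =ᵇ ⋃ k ∈ Q, A k := by
  induction hPQ with
  | base hp => exact hS _ hp
  | symm _ ih =>
    obtain ⟨h, hH, hh⟩ := ih
    refine ⟨h⁻¹, inv_mem hH, ?_⟩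
    have := (h.symm.image_residualEq hh).symm
    rwa [image_image, funext h.symm_apply_apply, image_id'] at this
  | @compl P Q _ ih =>
    obtain ⟨h, hH, hh⟩ := ih
    refine ⟨h, hH, (h.image_residualEq (biUnion_compl_residualEq hqd hcover P)).trans ?_⟩
    rw [h.image_compl]
    exact hh.compl.trans (biUnion_compl_residualEq hqd hcover Q).symm
  | trans _ _ ih₁ ih₂ =>
    obtain ⟨h₁, hH₁, hh₁⟩ := ih₁
    obtain ⟨h₂, hH₂, hh₂⟩ := ih₂
    refine ⟨h₂ * h₁, mul_mem hH₂ hH₁, ?_⟩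
    show (fun x => h₂ (h₁ x)) '' _ =ᵇ _
    rw [← image_image]
    exact (h₂.image_residualEq hh₁).trans hh₂

end QuasiCongruence

section Baire

variable {X Y : Type*} [TopologicalSpace X] [TopologicalSpace Y]

theorem IsOpen.subset_closure_of_eventuallyLE [BaireSpace X] {U V : Set X} (hU : IsOpen U)
    (h : U ≤ᶠ[residual X] V) : U ⊆ closure V := by
  have hmeagre : IsMeagre (U \ closure V) := by
    filter_upwards [h] with x hx hx'
    exact hx'.2 (subset_closure (hx hx'.1))
  by_contra hsub
  exact not_isMeagre_of_isOpen (hU.sdiff isClosed_closure) (sdiff_nonempty.2 hsub) hmeagre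

theorem IsOpen.closure_eq_of_residualEq [BaireSpace X] {U V : Set X} (hU : IsOpen U)
    (hV : IsOpen V) (h : U =ᵇ V) : closure U = closure V :=
  (closure_minimal (hU.subset_closure_of_eventuallyLE h.le) isClosed_closure).antisymm
    (closure_minimal (hV.subset_closure_of_eventuallyLE h.symm.le) isClosed_closure)

theorem Homeomorph.image_interior_closure (h : X ≃ₜ Y) (s : Set X) :
    h '' interior (closure s) = interior (closure (h '' s)) := by
  rw [h.image_interior, h.image_closure]

theorem not_image_residualEq_compl [BaireSpace X] [Nonempty X] {h : X ≃ₜ X}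
    (hrec : ∀ x, h x ∈ closure (range fun n : ℕ => (h ^ (2 * n)) x)) {V : Set X}
    (hV : IsOpen V) : ¬ h '' V =ᵇ (Vᶜ : Set X) := by
  intro hhV
  have hhVo : IsOpen (h '' V) := h.isOpenMap V hV
  obtain ⟨x, hx⟩ : V.Nonempty := by
    refine nonempty_iff_ne_empty.2 fun hV0 =>
      not_isMeagre_of_isOpen (X := X) isOpen_univ univ_nonempty ?_
    simpa [hV0, IsMeagre] using hhV
  have hdisj : Disjoint (h '' V) V := by
    rw [disjoint_iff_inter_eq_empty, ← subset_empty_iff, ← closure_empty]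
    refine (hhVo.inter hV).subset_closure_of_eventuallyLE ?_
    filter_upwards [eventuallyEq_set.1 hhV] with y hy hy'
    exact hy.1 hy'.1 hy'.2
  have hsq : ⇑(h ^ 2) '' V =ᵇ V := by
    rw [sq, show ⇑(h * h) = h ∘ h from rfl, image_comp]
    refine (h.image_residualEq hhV).trans ?_
    rw [h.image_compl]
    simpa only [compl_compl] using hhV.compl
  set W := interior (closure V)
  have hxW : x ∈ W := interior_maximal subset_closure hV hx
  have hW : MapsTo ⇑(h ^ 2) W W := by
    rw [mapsTo_iff_image_subset, (h ^ 2).image_interior_closure,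
      ((h ^ 2).isOpenMap V hV).closure_eq_of_residualEq hV hsq]
  have horbit : range (fun n : ℕ => (h ^ (2 * n)) x) ⊆ closure V := by
    rintro - ⟨n, rfl⟩
    dsimp only
    rw [pow_mul, hom_coe_pow (fun g : X ≃ₜ X => ⇑g) rfl (fun _ _ => rfl)]
    exact interior_subset (hW.iterate n hxW)
  have h1 : h x ∈ closure V := closure_minimal horbit isClosed_closure (hrec x)
  have h2 : h x ∈ interior (closure (h '' V)) := by
    rw [← h.image_interior_closure]
    exact mem_image_of_mem h hxW
  exact ((hdisj.closure_left hV).mono_left interior_subset).closure_right isOpen_interior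
    |>.ne_of_mem h2 h1 rfl

end Baire

section Rotation

open scoped RealInnerProductSpace

theorem Circle.denseRange_zpow {a : Circle} (ha : ¬ IsOfFinOrder a) :
    DenseRange (a ^ · : ℤ → Circle) := by
  let e := AddCircle.homeomorphCircle (T := 1) one_ne_zero
  obtain ⟨θ, rfl⟩ := e.surjective a
  have hθ : addOrderOf θ = 0 := addOrderOf_eq_zero_iff'.2 fun n hn hnθ =>
    ha (isOfFinOrder_iff_pow_eq_one.2 ⟨n, hn, by
      simpa [e, AddCircle.homeomorphCircle_apply, ← AddCircle.toCircle_nsmul] using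
        congrArg AddCircle.toCircle hnθ⟩)
  have := e.surjective.denseRange.comp (AddCircle.denseRange_zsmul_iff.2 hθ) e.continuous
  simpa [e, Function.comp_def, AddCircle.homeomorphCircle_apply, AddCircle.toCircle_zsmul]
    using this

theorem Circle.mem_closure_range_pow_two_mul {a : Circle} (ha : ¬ IsOfFinOrder a) :
    a ∈ closure (range fun n : ℕ => a ^ (2 * n)) := by
  have ha2 : ¬ IsOfFinOrder (a ^ 2) := by simpa [isOfFinOrder_pow] using ha
  have := denseRange_zpow_iff_pow.1 (Circle.denseRange_zpow ha2)
  simp only [← pow_mul] at this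
  exact this.closure_range ▸ mem_univ a

variable {E : Type*} [NormedAddCommGroup E] [InnerProductSpace ℝ E] [FiniteDimensional ℝ E]

theorem LinearMap.det_adjoint {𝕜 F : Type*} [RCLike 𝕜] [NormedAddCommGroup F]
    [InnerProductSpace 𝕜 F] [FiniteDimensional 𝕜 F] (f : F →ₗ[𝕜] F) :
    (LinearMap.adjoint f).det = star f.det := by
  let b := stdOrthonormalBasis 𝕜 F
  rw [← LinearMap.det_toMatrix b.toBasis, LinearMap.toMatrix_adjoint b b,
    Matrix.det_conjTranspose, LinearMap.det_toMatrix]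

/-- Euler's rotation theorem, in any odd dimension. -/
theorem LinearIsometryEquiv.exists_ne_zero_apply_eq_self (hE : Odd (finrank ℝ E))
    {σ : E ≃ₗᵢ[ℝ] E} (hσ : LinearMap.det (σ.toLinearEquiv : E →ₗ[ℝ] E) = 1) :
    ∃ v, v ≠ 0 ∧ σ v = v := by
  set f : E →ₗ[ℝ] E := (σ.toLinearEquiv : E →ₗ[ℝ] E)
  have hfactor : f - 1 = f ∘ₗ LinearMap.adjoint (1 - f) := by
    ext x
    simp [f, σ.adjoint_toLinearMap_eq_symm]
  have hdet : (f - 1).det = 0 := by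
    have h : (f - 1).det = -(f - 1).det := calc
      (f - 1).det = (1 - f).det := by
        rw [hfactor, LinearMap.det_comp, hσ, one_mul, LinearMap.det_adjoint, star_trivial]
      _ = ((-1 : ℝ) • (f - 1)).det := by rw [neg_one_smul, neg_sub]
      _ = -(f - 1).det := by rw [LinearMap.det_smul, hE.neg_one_pow, neg_one_mul]
    linarith
  obtain ⟨v, hv, hv0⟩ :=
    Submodule.exists_mem_ne_zero_of_ne_bot (LinearMap.bot_lt_ker_of_det_eq_zero hdet).ne'
  exact ⟨v, hv0, sub_eq_zero.1 hv⟩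

theorem LinearIsometryEquiv.exists_restrict_eq_conj_complex {K : Submodule ℝ E}
    (hK2 : finrank ℝ K = 2) {σ : E ≃ₗᵢ[ℝ] E} (hK : ∀ u ∈ K, σ u ∈ K) :
    ∃ (φ : K ≃ₗᵢ[ℝ] ℂ) (B : ℂ ≃ₗᵢ[ℝ] ℂ), ∀ u : K, σ u = φ.symm (B (φ u)) := by
  let φ : K ≃ₗᵢ[ℝ] ℂ :=
    (stdOrthonormalBasis ℝ K).equiv Complex.orthonormalBasisOneI (finCongr hK2)
  let τ : K →ₗᵢ[ℝ] K := ⟨(σ.toLinearEquiv : E →ₗ[ℝ] E).restrict hK, fun u => σ.norm_map u⟩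
  refine ⟨φ, ((φ.toLinearIsometry.comp τ).comp φ.symm.toLinearIsometry).toLinearIsometryEquiv rfl,
    fun u => ?_⟩
  simp only [LinearIsometry.toLinearIsometryEquiv_apply, LinearIsometry.coe_comp,
    coe_toLinearIsometry, Function.comp_apply, symm_apply_apply]
  rfl

theorem LinearIsometryEquiv.sq_eq_one_or_exists_circle_orbit (hE : finrank ℝ E = 3)
    {σ : E ≃ₗᵢ[ℝ] E} {v : E} (hv : ‖v‖ = 1) (hσv : σ v = v) :
    σ ^ 2 = 1 ∨ ∃ a : Circle, ∀ x : E,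
      ∃ γ : Circle → E, Continuous γ ∧ ∀ n : ℕ, (σ ^ n) x = γ (a ^ n) := by
  set K := (ℝ ∙ v)ᗮ
  have hK : ∀ u ∈ K, σ u ∈ K := by
    intro u hu
    rw [Submodule.mem_orthogonal_singleton_iff_inner_right] at hu ⊢
    rw [← hσv, σ.inner_map_map, hu]
  have hdec : ∀ x : E, ∃ (c : ℝ) (u : K), x = c • v + u := by
    intro x
    refine ⟨⟪v, x⟫, ⟨x - ⟪v, x⟫ • v, ?_⟩, by simp⟩
    rw [Submodule.mem_orthogonal_singleton_iff_inner_right, inner_sub_right, real_inner_smul_right,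
      real_inner_self_eq_norm_sq, hv]
    ring
  have : Fact (finrank ℝ E = 2 + 1) := ⟨hE⟩
  obtain ⟨φ, B, hB⟩ := σ.exists_restrict_eq_conj_complex
    (Submodule.finrank_orthogonal_span_singleton (by rintro rfl; simp at hv)) hK
  -- `B` is a rotation `z ↦ a * z`, or a reflection `z ↦ a * conj z`, which squares to `1`.
  obtain ⟨a, hBa | hBa⟩ := linear_isometry_complex B <;> simp only [hBa] at hB
  · right
    refine ⟨a, fun x => ?_⟩
    obtain ⟨c, u, rfl⟩ := hdec x
    refine ⟨fun w => c • v + φ.symm (w * φ u), by fun_prop, fun n => ?_⟩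
    induction n with
    | zero => simp
    | succ n ih =>
      rw [pow_succ', LinearIsometryEquiv.coe_mul, Function.comp_apply, ih, map_add, map_smul, hσv,
        hB]
      simp [rotation_apply, pow_succ', mul_assoc]
  · left
    ext x
    obtain ⟨c, u, rfl⟩ := hdec x
    simp [sq, hσv, hB, rotation_apply, ← Circle.coe_inv_eq_conj]

theorem LinearIsometryEquiv.mem_closure_range_pow_two_mul_apply (hE : finrank ℝ E = 3)
    {σ : E ≃ₗᵢ[ℝ] E} (hdet : LinearMap.det (σ.toLinearEquiv : E →ₗ[ℝ] E) = 1)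
    (hσ : ¬ IsOfFinOrder σ) (x : E) :
    σ x ∈ closure (range fun n : ℕ => (σ ^ (2 * n)) x) := by
  obtain ⟨v, hv0, hσv⟩ := σ.exists_ne_zero_apply_eq_self (by rw [hE]; decide) hdet
  obtain h2 | ⟨a, ha⟩ := σ.sq_eq_one_or_exists_circle_orbit hE (v := ‖v‖⁻¹ • v)
    (norm_smul_inv_norm hv0) (by rw [map_smul, hσv])
  · exact absurd (isOfFinOrder_iff_pow_eq_one.2 ⟨2, two_pos, h2⟩) hσ
  have ha' : ¬ IsOfFinOrder a := by
    rw [isOfFinOrder_iff_pow_eq_one]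
    rintro ⟨n, hn, han⟩
    refine hσ (isOfFinOrder_iff_pow_eq_one.2 ⟨n, hn, LinearIsometryEquiv.ext fun y => ?_⟩)
    obtain ⟨γ, -, hγ⟩ := ha y
    rw [hγ n, han, ← pow_zero a, ← hγ 0, pow_zero]
  obtain ⟨γ, hγc, hγ⟩ := ha x
  have hrange :
      γ '' range (fun n : ℕ => a ^ (2 * n)) = range fun n : ℕ => (σ ^ (2 * n)) x := by
    simp [← range_comp, Function.comp_def, hγ]
  have hσx : σ x = γ a := by simpa using hγ 1
  rw [hσx, ← hrange]
  exact image_closure_subset_closure_image hγc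
    (mem_image_of_mem γ (Circle.mem_closure_range_pow_two_mul ha'))

end Rotation

instance IsFreeGroup.isMulTorsionFree {G : Type*} [Group G] [IsFreeGroup G] :
    IsMulTorsionFree G :=
  (IsFreeGroup.toFreeGroup G).injective.isMulTorsionFree (IsFreeGroup.toFreeGroup G).toMonoidHom

section Sphere

instance inst_s9 : CompactSpace S2 := isCompact_iff_compactSpace.1 (isCompact_sphere 0 1)

instance : Nonempty S2 :=
  ⟨⟨EuclideanSpace.single 0 1, by simp [S2]⟩⟩

noncomputable def sphereHomeomorph : (E3 ≃ₗᵢ[ℝ] E3) →* (S2 ≃ₜ S2) where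
  toFun f :=
    { toFun := sphereMap f
      invFun := sphereMap f.symm
      left_inv := fun x => Subtype.ext (f.symm_apply_apply x)
      right_inv := fun x => Subtype.ext (f.apply_symm_apply x)
      continuous_toFun := (f.continuous.comp continuous_subtype_val).subtype_mk _
      continuous_invFun := (f.symm.continuous.comp continuous_subtype_val).subtype_mk _ }
  map_one' := rfl
  map_mul' _ _ := rfl

theorem sphereHomeomorph_mem_closure_range_pow {σ : E3 ≃ₗᵢ[ℝ] E3} (hσ : IsRotation σ)
    (htf : IsOfFinOrder σ → σ = 1) (x : S2) :
    sphereHomeomorph σ x ∈ closure (range fun n : ℕ => (sphereHomeomorph σ ^ (2 * n)) x) := by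
  rw [closure_subtype, ← range_comp]
  by_cases hfin : IsOfFinOrder σ
  · obtain rfl := htf hfin
    exact subset_closure ⟨0, by simp⟩
  · simp only [← map_pow]
    exact σ.mem_closure_range_pow_two_mul_apply finrank_euclideanSpace_fin hσ hfin (x : E3)

end Sphere

/-- If `G` is a group of rotations of `S²` which is free as an abstract group, and a system of
congruences has a quasi-solution in `S²` by open sets with all witnesses in `G`, then the
system is weak. -/
theorem stmt_9 {r m : ℕ} (L R : Fin m → Set (Fin r))
    (G : Subgroup (E3 ≃ₗᵢ[ℝ] E3))
    (hGrot : ∀ g ∈ G, IsRotation g)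
    (hGfree : IsFreeGroup G)
    (A : Fin r → Set S2)
    (hopen : ∀ k, IsOpen (A k))
    (hqd : ∀ k k', k ≠ k' → IsMeagre (A k ∩ A k'))
    (hcover : (⋃ k, A k) ∈ residual S2)
    (hwit : ∀ i, ∃ σ ∈ G,
      IsMeagre (symmDiff (sphereMap σ '' ⋃ k ∈ L i, A k) (⋃ k ∈ R i, A k))) :
    SysWeak L R := by
  intro P hP
  obtain ⟨-, ⟨σ, hσG, rfl⟩, hσ⟩ :=
    hP.exists_image_residualEq (H := G.map sphereHomeomorph) hqd hcover (by
      rintro - ⟨i, rfl⟩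
      obtain ⟨σ, hσG, hσ⟩ := hwit i
      exact ⟨sphereHomeomorph σ, Subgroup.mem_map_of_mem _ hσG, isMeagre_symmDiff_iff.1 hσ⟩)
  have htf : IsOfFinOrder σ → σ = 1 := fun hfin => congrArg Subtype.val
    (IsOfFinOrder.eq_one' (a := (⟨σ, hσG⟩ : G)) (Submonoid.isOfFinOrder_coe.1 hfin))
  exact not_image_residualEq_compl (sphereHomeomorph_mem_closure_range_pow (hGrot σ hσG) htf)
    (isOpen_biUnion fun k _ => hopen k) (hσ.trans (biUnion_compl_residualEq hqd hcover P))
end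

section
/- If A is an open subset of S² with A ≠ ∅ and A ≠ S², then there do not exist two distinct lines ℓ and ℓ' through the origin in ℝ³ such that A is invariant under every rotation of S² about the axis ℓ and also invariant under every rotation of S² about the axis ℓ'. -/
open Set

open Module
open scoped RealInnerProductSpace

lemma Icc_subset_of_forall_Icc_subset {k : ℝ} (hk0 : 0 ≤ k) (hk1 : k < 1) {D : Set ℝ}
    (hDc : IsClosed D) (hD : D ⊆ Icc (-1) 1) (hne : D.Nonempty)
    (hspread : ∀ a ∈ D, Icc (k * a - (1 - k)) (k * a + (1 - k)) ⊆ D) : Icc (-1) 1 ⊆ D := by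
  have hint : ∀ a ∈ D, Ioo (k * a - (1 - k)) (k * a + (1 - k)) ⊆ interior D := fun a ha =>
    interior_maximal (Ioo_subset_Icc_self.trans (hspread a ha)) isOpen_Ioo
  have hIoo : Ioo (-1) 1 ⊆ interior D := by
    refine isPreconnected_Ioo.subset_of_closure_inter_subset isOpen_interior ?_ ?_
    · obtain ⟨a, ha⟩ := hne
      obtain ⟨ha₁, ha₂⟩ := hD ha
      exact ⟨k * a, ⟨by nlinarith, by nlinarith⟩, hint a ha ⟨by linarith, by linarith⟩⟩
    · rintro x ⟨hx, hx₁, hx₂⟩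
      exact hint x (closure_minimal interior_subset hDc hx) ⟨by nlinarith, by nlinarith⟩
  calc Icc (-1) 1 = closure (Ioo (-1 : ℝ) 1) := (closure_Ioo (by norm_num)).symm
    _ ⊆ D := closure_minimal (hIoo.trans interior_subset) hDc

section InnerProductSpace

variable {E : Type*} [NormedAddCommGroup E] [InnerProductSpace ℝ E]

lemma sq_inner_lt_one_of_span_singleton_ne {u w : E} (hu : ‖u‖ = 1) (hw : ‖w‖ = 1)
    (huw : (ℝ ∙ u) ≠ ℝ ∙ w) : ⟪u, w⟫ ^ 2 < 1 := by
  by_contra! h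
  have habs : |⟪u, w⟫ / (‖u‖ * ‖w‖)| = 1 := by
    have := abs_real_inner_le_norm u w
    rw [hu, hw, one_mul] at this ⊢
    rw [div_one]
    nlinarith [sq_abs ⟪u, w⟫, abs_nonneg ⟪u, w⟫]
  obtain ⟨-, r, hr, rfl⟩ := (abs_real_inner_div_norm_mul_norm_eq_one_iff u w).mp habs
  exact huw (Submodule.span_singleton_smul_eq hr.isUnit u).symm

lemma inner_mem_Icc_of_mem_sphere {u x : E} (hu : ‖u‖ = 1) (hx : x ∈ Metric.sphere (0 : E) 1) :
    ⟪u, x⟫ ∈ Icc (-1) 1 := by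
  have := abs_real_inner_le_norm u x
  rw [hu, mem_sphere_zero_iff_norm.mp hx, one_mul] at this
  exact abs_le.mp this

def RotInvariant (u : E) (B : Set E) : Prop :=
  ∀ τ : E ≃ₗᵢ[ℝ] E, LinearMap.det (τ.toLinearEquiv : E →ₗ[ℝ] E) = 1 → τ u = u → MapsTo τ B B

variable [FiniteDimensional ℝ E]

lemma exists_norm_eq_one_eq_span_singleton {ℓ : Submodule ℝ E} (hℓ : finrank ℝ ℓ = 1) :
    ∃ u : E, ‖u‖ = 1 ∧ ℓ = ℝ ∙ u := by
  obtain ⟨v, hv, hv0⟩ := Submodule.exists_mem_ne_zero_of_ne_bot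
    (Submodule.one_le_finrank_iff.mp hℓ.ge)
  refine ⟨‖v‖⁻¹ • v, norm_smul_inv_norm hv0, ?_⟩
  rw [Submodule.span_singleton_smul_eq (inv_ne_zero (norm_ne_zero_iff.mpr hv0)).isUnit]
  exact (Submodule.eq_of_le_of_finrank_eq ((Submodule.span_singleton_le_iff_mem _ _).mpr hv)
    (by rw [finrank_span_singleton hv0, hℓ])).symm

lemma exists_norm_eq_one_inner_eq_zero (hE : 2 < finrank ℝ E) (u x : E) :
    ∃ v : E, ‖v‖ = 1 ∧ ⟪u, v⟫ = 0 ∧ ⟪x, v⟫ = 0 := by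
  classical
  set K : Submodule ℝ E := Submodule.span ℝ ({u, x} : Finset E)
  have hK : finrank ℝ K ≤ 2 := (finrank_span_finset_le_card _).trans Finset.card_le_two
  have hKperp : Kᗮ ≠ ⊥ := by
    intro h
    have := K.finrank_add_finrank_orthogonal
    rw [h, finrank_bot] at this
    omega
  obtain ⟨v, hv, hv0⟩ := Submodule.exists_mem_ne_zero_of_ne_bot hKperp
  have hv' : ‖v‖⁻¹ • v ∈ Kᗮ := Kᗮ.smul_mem _ hv
  exact ⟨‖v‖⁻¹ • v, norm_smul_inv_norm hv0,
    K.inner_right_of_mem_orthogonal (Submodule.subset_span (by simp)) hv',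
    K.inner_right_of_mem_orthogonal (Submodule.subset_span (by simp)) hv'⟩

lemma det_reflection_orthogonal_singleton {v : E} (hv : v ≠ 0) :
    LinearMap.det ((ℝ ∙ v)ᗮ.reflection.toLinearEquiv : E →ₗ[ℝ] E) = -1 := by
  have := (ℝ ∙ v)ᗮ.det_reflection
  rwa [Submodule.orthogonal_orthogonal, finrank_span_singleton hv, pow_one] at this

lemma exists_det_eq_one_fix_apply_eq (hE : 2 < finrank ℝ E) (u : E) {x y : E}
    (hxy : ‖x‖ = ‖y‖) (hu : ⟪u, x⟫ = ⟪u, y⟫) :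
    ∃ τ : E ≃ₗᵢ[ℝ] E, LinearMap.det (τ.toLinearEquiv : E →ₗ[ℝ] E) = 1 ∧ τ u = u ∧ τ x = y := by
  rcases eq_or_ne x y with rfl | hne
  · exact ⟨LinearIsometryEquiv.refl ℝ E, LinearMap.det_id, rfl, rfl⟩
  obtain ⟨v, hv, huv, hxv⟩ := exists_norm_eq_one_inner_eq_zero hE u x
  have hσu : u ∈ (ℝ ∙ v)ᗮ := Submodule.mem_orthogonal_singleton_iff_inner_left.mpr huv
  have hσx : x ∈ (ℝ ∙ v)ᗮ := Submodule.mem_orthogonal_singleton_iff_inner_left.mpr hxv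
  have hρu : u ∈ (ℝ ∙ (x - y))ᗮ := Submodule.mem_orthogonal_singleton_iff_inner_left.mpr
    (by rw [inner_sub_right, hu, sub_self])
  -- the second reflection swaps `x` and `y`; the first one only corrects the determinant
  refine ⟨(ℝ ∙ v)ᗮ.reflection.trans (ℝ ∙ (x - y))ᗮ.reflection, ?_, ?_, ?_⟩
  · rw [LinearIsometryEquiv.toLinearEquiv_trans, LinearEquiv.coe_trans, LinearMap.det_comp,
      det_reflection_orthogonal_singleton (norm_ne_zero_iff.mp (hv.trans_ne one_ne_zero)),
      det_reflection_orthogonal_singleton (sub_ne_zero.mpr hne)]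
    norm_num
  · simp [Submodule.reflection_mem_subspace_eq_self, hσu, hρu]
  · simp [Submodule.reflection_mem_subspace_eq_self, hσx, Submodule.reflection_sub hxy]

/-- `hab` says that the Gram determinant of `u`, `w` and the sought `x` is nonnegative. -/
lemma exists_norm_eq_one_inner_eq (hE : 2 < finrank ℝ E) {u w : E} (hu : ‖u‖ = 1)
    (hw : ‖w‖ = 1) (huw : ⟪u, w⟫ ^ 2 < 1) {a b : ℝ}
    (hab : a ^ 2 + b ^ 2 - 2 * ⟪u, w⟫ * a * b ≤ 1 - ⟪u, w⟫ ^ 2) :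
    ∃ x : E, ‖x‖ = 1 ∧ ⟪u, x⟫ = a ∧ ⟪w, x⟫ = b := by
  obtain ⟨n, hn, hun, hwn⟩ := exists_norm_eq_one_inner_eq_zero hE u w
  set t := ⟪u, w⟫
  have hd : 1 - t ^ 2 ≠ 0 := by linarith
  set α := (a - t * b) / (1 - t ^ 2)
  set β := (b - t * a) / (1 - t ^ 2)
  set γ := √((1 - t ^ 2 - (a ^ 2 + b ^ 2 - 2 * t * a * b)) / (1 - t ^ 2))
  have hα : α + β * t = a := by simp only [α, β]; field_simp; ring
  have hβ : α * t + β = b := by simp only [α, β]; field_simp; ring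
  have hγ : α * a + β * b + γ * γ = 1 := by
    rw [Real.mul_self_sqrt (div_nonneg (by linarith) (by linarith))]
    simp only [α, β]; field_simp; ring
  set x := α • u + β • w + γ • n
  have hux : ⟪u, x⟫ = a := by
    simp only [x, inner_add_right, real_inner_smul_right, real_inner_self_eq_norm_sq, hu, hun]
    linear_combination hα
  have hwx : ⟪w, x⟫ = b := by
    simp only [x, inner_add_right, real_inner_smul_right, real_inner_self_eq_norm_sq, hw, hwn,
      real_inner_comm u w]
    linear_combination hβ
  have hnx : ⟪n, x⟫ = γ := by
    simp only [x, inner_add_right, real_inner_smul_right, real_inner_self_eq_norm_sq, hn,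
      real_inner_comm u n, real_inner_comm w n, hun, hwn]
    ring
  have hxx : ⟪α • u + β • w + γ • n, x⟫ = 1 := by
    rw [inner_add_left, inner_add_left, real_inner_smul_left, real_inner_smul_left,
      real_inner_smul_left, hux, hwx, hnx, hγ]
  refine ⟨x, ?_, hux, hwx⟩
  rw [norm_eq_sqrt_real_inner, hxx, Real.sqrt_one]

lemma RotInvariant.mem_of_inner_eq (hE : 2 < finrank ℝ E) {u : E} {B : Set E}
    (hB : RotInvariant u B) {x y : E} (hx : x ∈ B) (hxy : ‖x‖ = ‖y‖) (hu : ⟪u, x⟫ = ⟪u, y⟫) :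
    y ∈ B := by
  obtain ⟨τ, hτ, hτu, rfl⟩ := exists_det_eq_one_fix_apply_eq hE u hxy hu
  exact hB τ hτ hτu hx

lemma Icc_subset_image_inner_of_rotInvariant (hE : 2 < finrank ℝ E) {u w : E} (hu : ‖u‖ = 1)
    (hw : ‖w‖ = 1) (huw : ⟪u, w⟫ ^ 2 < 1) {B : Set E} (hBs : B ⊆ Metric.sphere 0 1)
    (hBu : RotInvariant u B) (hBw : RotInvariant w B) {x : E} (hx : x ∈ B) :
    Icc (⟪u, w⟫ ^ 2 * ⟪u, x⟫ - (1 - ⟪u, w⟫ ^ 2)) (⟪u, w⟫ ^ 2 * ⟪u, x⟫ + (1 - ⟪u, w⟫ ^ 2)) ⊆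
      (fun y => ⟪u, y⟫) '' B := by
  rintro a' ⟨ha'₁, ha'₂⟩
  set t := ⟪u, w⟫
  set a := ⟪u, x⟫
  have hx1 : ‖x‖ = 1 := mem_sphere_zero_iff_norm.mp (hBs hx)
  have ha : a ^ 2 ≤ 1 := by
    obtain ⟨ha₁, ha₂⟩ := inner_mem_Icc_of_mem_sphere hu (hBs hx)
    nlinarith
  have hwu : ⟪w, u⟫ = t := real_inner_comm _ _
  -- rotate `x` about `u` to a point `y` of `w`-height `t a`, then `y` about `w` to `u`-height `a'`
  obtain ⟨y, hy1, hyu, hyw⟩ :=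
    exists_norm_eq_one_inner_eq hE hu hw huw (a := a) (b := t * a) (by nlinarith)
  have hyB : y ∈ B := hBu.mem_of_inner_eq hE hx (hx1.trans hy1.symm) hyu.symm
  obtain ⟨z, hz1, hzw, hzu⟩ := exists_norm_eq_one_inner_eq hE hw hu (by rwa [hwu]) (a := t * a)
    (b := a') (by rw [hwu]; nlinarith [mul_nonneg (sub_nonneg.mpr huw.le) (sub_nonneg.mpr ha)])
  exact ⟨z, hBw.mem_of_inner_eq hE hyB (hy1.trans hz1.symm) (hyw.trans hzw.symm), hzu⟩

lemma sphere_subset_of_rotInvariant (hE : 2 < finrank ℝ E) {u w : E} (hu : ‖u‖ = 1)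
    (hw : ‖w‖ = 1) (huw : ⟪u, w⟫ ^ 2 < 1) {B : Set E} (hBc : IsClosed B) (hBne : B.Nonempty)
    (hBs : B ⊆ Metric.sphere 0 1) (hBu : RotInvariant u B) (hBw : RotInvariant w B) :
    Metric.sphere 0 1 ⊆ B := by
  have hD : Icc (-1) 1 ⊆ (fun y => ⟪u, y⟫) '' B := by
    refine Icc_subset_of_forall_Icc_subset (sq_nonneg _) huw ?_ ?_ (hBne.image _) ?_
    · exact ((isCompact_sphere 0 1).of_isClosed_subset hBc hBs).image
        (continuous_const.inner continuous_id) |>.isClosed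
    · rintro _ ⟨x, hx, rfl⟩
      exact inner_mem_Icc_of_mem_sphere hu (hBs hx)
    · rintro _ ⟨x, hx, rfl⟩
      exact Icc_subset_image_inner_of_rotInvariant hE hu hw huw hBs hBu hBw hx
  intro z hz
  obtain ⟨x, hx, hxz⟩ := hD (inner_mem_Icc_of_mem_sphere hu hz)
  have hxz' : ‖x‖ = ‖z‖ := by
    rw [mem_sphere_zero_iff_norm.mp (hBs hx), mem_sphere_zero_iff_norm.mp hz]
  exact hBu.mem_of_inner_eq hE hx hxz' hxz

end InnerProductSpace

lemma rotInvariant_image_compl {A : Set S2} {u : E3}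
    (hA : ∀ τ : E3 ≃ₗᵢ[ℝ] E3, IsRotation τ → FixesAxis τ (ℝ ∙ u) → sphereMap τ '' A = A) :
    RotInvariant u (((↑) : S2 → E3) '' Aᶜ) := by
  rintro τ hτ hτu _ ⟨x, hx, rfl⟩
  have hfix : FixesAxis τ (ℝ ∙ u) := by
    intro v hv
    obtain ⟨c, rfl⟩ := Submodule.mem_span_singleton.mp hv
    rw [map_smul, hτu]
  refine ⟨sphereMap τ x, fun hτx => hx ?_, rfl⟩
  rw [← hA τ hτ hfix] at hτx
  obtain ⟨y, hy, hyx⟩ := hτx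
  rwa [← Subtype.ext (τ.injective (congrArg Subtype.val hyx))]

/-- If `A` is a nonempty open proper subset of `S²`, there do not exist two distinct lines
`ℓ ≠ ℓ'` through the origin such that `A` is invariant under every rotation of `S²` about `ℓ`
and also under every rotation about `ℓ'`. -/
theorem stmt_10 (A : Set S2) (hA : IsOpen A) (hne : A.Nonempty) (hproper : A ≠ univ) :
    ¬ ∃ ℓ ℓ' : Submodule ℝ E3, IsLine ℓ ∧ IsLine ℓ' ∧ ℓ ≠ ℓ' ∧
      (∀ τ : E3 ≃ₗᵢ[ℝ] E3, IsRotation τ → FixesAxis τ ℓ → sphereMap τ '' A = A) ∧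
      (∀ τ : E3 ≃ₗᵢ[ℝ] E3, IsRotation τ → FixesAxis τ ℓ' → sphereMap τ '' A = A) := by
  rintro ⟨ℓ, ℓ', hℓ, hℓ', hℓℓ', hAℓ, hAℓ'⟩
  obtain ⟨u, hu, rfl⟩ := exists_norm_eq_one_eq_span_singleton hℓ
  obtain ⟨w, hw, rfl⟩ := exists_norm_eq_one_eq_span_singleton hℓ'
  have hsphere := sphere_subset_of_rotInvariant (by simp) hu hw
    (sq_inner_lt_one_of_span_singleton_ne hu hw hℓℓ')
    (Metric.isClosed_sphere.isClosedEmbedding_subtypeVal.isClosedMap _ hA.isClosed_compl)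
    ((nonempty_compl.mpr hproper).image _) (by rintro _ ⟨x, -, rfl⟩; exact x.2)
    (rotInvariant_image_compl hAℓ) (rotInvariant_image_compl hAℓ')
  obtain ⟨x, hx⟩ := hne
  obtain ⟨y, hy, hyx⟩ := hsphere x.2
  exact hy (Subtype.ext hyx ▸ hx)
end

section
/- Let σ_1,…,σ_m̄ be rotations of S² of infinite order and τ'_{m̄+1},…,τ'_m rotations of S² of order 4 such that the group G' of rotations they generate is the internal free product of the cyclic groups ⟨σ_i⟩ and ⟨τ'_i⟩. Let ζ be the antipodal map of S² (x ↦ −x), set τ_i = ζ ∘ τ'_i, and let G be the group of isometries of S² generated by the σ_i and the τ_i. Then the assignment σ_i ↦ σ_i, τ'_i ↦ τ_i extends to a group isomorphism from G' onto G, and every element of G whose image under the homomorphism G → ℤ/2ℤ sending each σ_i to 0 and each τ_i to 1 is nonzero has no fixed point on S². -/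
/-- Relations making the generators `i` with `mb ≤ i` have order dividing 4 (and no relations
on the others): the presented group is the free product of `mb` copies of `ℤ` and `m - mb`
copies of `ℤ/4ℤ`. -/
def PRels (m mb : ℕ) : Set (FreeGroup (Fin m)) :=
  {x | ∃ i : Fin m, mb ≤ (i : ℕ) ∧ x = FreeGroup.of i ^ 4}

open Module LinearMap
open scoped RealInnerProductSpace

section Geometry

variable {V : Type*} [NormedAddCommGroup V] [InnerProductSpace ℝ V]

noncomputable def LinearIsometryEquiv.detHom : (V ≃ₗᵢ[ℝ] V) →* ℝ where
  toFun u := u.toLinearMap.det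
  map_one' := det_id
  map_mul' u v := det_comp u.toLinearMap v.toLinearMap

theorem LinearMap.det_adjoint_eq [FiniteDimensional ℝ V] (A : V →ₗ[ℝ] V) :
    (adjoint A).det = A.det := by
  let b := stdOrthonormalBasis ℝ V
  rw [← det_toMatrix b.toBasis, ← det_toMatrix b.toBasis, toMatrix_adjoint,
    Matrix.det_conjTranspose, star_trivial]

theorem commute_of_forall_apply_eq_neg {z : V ≃ₗᵢ[ℝ] V} (hz : ∀ x, z x = -x)
    (a : V ≃ₗᵢ[ℝ] V) : Commute z a :=
  LinearIsometryEquiv.ext fun x => by simp [hz]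

theorem sq_eq_one_of_forall_apply_eq_neg {z : V ≃ₗᵢ[ℝ] V} (hz : ∀ x, z x = -x) : z ^ 2 = 1 :=
  LinearIsometryEquiv.ext fun x => by simp [pow_two, hz]

theorem notMem_ker_detHom_of_forall_apply_eq_neg [FiniteDimensional ℝ V]
    (hV : Odd (finrank ℝ V)) {z : V ≃ₗᵢ[ℝ] V} (hz : ∀ x, z x = -x) :
    z ∉ LinearIsometryEquiv.detHom.ker := by
  have hneg : z.toLinearMap = (-1 : ℝ) • LinearMap.id := LinearMap.ext fun x => by simp [hz x]
  rw [MonoidHom.mem_ker]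
  change z.toLinearMap.det ≠ 1
  rw [hneg, det_smul, det_id, hV.neg_one_pow]
  norm_num

theorem exists_ne_zero_apply_eq_self_of_det_eq_one [FiniteDimensional ℝ V]
    (hV : Odd (finrank ℝ V)) (u : V ≃ₗᵢ[ℝ] V) (hu : u.toLinearMap.det = 1) :
    ∃ y ≠ 0, u y = y := by
  -- `u⁻¹ = u*` gives `det (u - 1) = det (1 - u)`, which is `-det (u - 1)` in odd dimension.
  have hsub : u.toLinearMap - LinearMap.id =
      u.toLinearMap ∘ₗ adjoint (LinearMap.id - u.toLinearMap) := by
    rw [map_sub, adjoint_id, u.adjoint_toLinearMap_eq_symm, comp_sub, comp_id]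
    ext v
    simp
  set D : ℝ := (u.toLinearMap - LinearMap.id).det with hD
  have hD0 : D = 0 := by
    have h : D = -D := calc
      D = (LinearMap.id - u.toLinearMap).det := by
          rw [hD, hsub, det_comp, hu, one_mul, det_adjoint_eq]
      _ = ((-1 : ℝ) • (u.toLinearMap - LinearMap.id)).det := by rw [neg_one_smul, neg_sub]
      _ = -D := by rw [det_smul, hV.neg_one_pow, neg_one_mul]
    linarith
  obtain ⟨y, hy, hy0⟩ := Submodule.exists_mem_ne_zero_of_ne_bot (bot_lt_ker_of_det_eq_zero hD0).ne'
  exact ⟨y, hy0, sub_eq_zero.mp hy⟩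

theorem mapsTo_orthogonal_of_mapsTo_symm (u : V ≃ₗᵢ[ℝ] V) (K : Submodule ℝ V)
    (hK : Set.MapsTo u.symm K K) : Set.MapsTo u Kᗮ Kᗮ := by
  intro z hz
  rw [SetLike.mem_coe, Submodule.mem_orthogonal] at hz ⊢
  intro k hk
  rw [← u.apply_symm_apply k, u.inner_map_map]
  exact hz _ (hK hk)

theorem apply_apply_eq_self_of_finrank_eq_one (u : V ≃ₗᵢ[ℝ] V) (L : Submodule ℝ V)
    (hL : finrank ℝ L = 1) (huL : Set.MapsTo u L L) {z : V} (hz : z ∈ L) : u (u z) = z := by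
  rcases eq_or_ne z 0 with rfl | hz0
  · simp
  obtain ⟨c, hc⟩ := (finrank_eq_one_iff_of_nonzero' (⟨z, hz⟩ : L) (by simpa using hz0)).mp hL
    ⟨u z, huL hz⟩
  have huz : u z = c • z := by simpa using congrArg Subtype.val hc.symm
  have hc2 : c * c = 1 := by
    have h := u.norm_map z
    rw [huz, norm_smul, Real.norm_eq_abs] at h
    have hc1 : |c| = 1 := by simpa [norm_ne_zero_iff.mpr hz0] using h
    rw [← abs_mul_abs_self, hc1, one_mul]
  rw [huz, map_smul, huz, smul_smul, hc2, one_smul]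

theorem mul_self_eq_one_of_apply_eq_neg_of_apply_eq_self [FiniteDimensional ℝ V]
    (hV : finrank ℝ V = 3) (u : V ≃ₗᵢ[ℝ] V) {x y : V} (hx0 : x ≠ 0) (hy0 : y ≠ 0)
    (hx : u x = -x) (hy : u y = y) : u * u = 1 := by
  -- `u` is an involution on the plane `K = span {x, y}` and acts by `±1` on the line `Kᗮ`.
  have hxy : ⟪x, y⟫ = 0 := by
    have h := u.inner_map_map x y
    rw [hx, hy, inner_neg_left] at h
    linarith
  set K := Submodule.span ℝ {x, y}
  have hK : ∀ w : V ≃ₗᵢ[ℝ] V, w x = -x → w y = y → ∀ v ∈ K, w (w v) = v ∧ w v ∈ K := by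
    intro w hwx hwy v hv
    obtain ⟨a, b, rfl⟩ := Submodule.mem_span_pair.mp hv
    exact ⟨by simp [hwx, hwy], Submodule.mem_span_pair.mpr ⟨-a, b, by simp [hwx, hwy]⟩⟩
  have hKrank : finrank ℝ K = 2 := by
    have hli : LinearIndependent ℝ ![x, y] := by
      refine linearIndependent_of_ne_zero_of_inner_eq_zero
        (by simp [Fin.forall_fin_two, hx0, hy0]) fun i j hij => ?_
      fin_cases i <;> fin_cases j <;> simp_all [real_inner_comm]
    have := finrank_span_eq_card hli
    rwa [Matrix.range_cons_cons_empty] at this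
  have hKo : finrank ℝ Kᗮ = 1 := by
    have := K.finrank_add_finrank_orthogonal
    omega
  have hxsymm : u.symm x = -x := by rw [u.symm_apply_eq, map_neg, hx, neg_neg]
  have hysymm : u.symm y = y := by rw [u.symm_apply_eq, hy]
  have hKo_maps : Set.MapsTo u Kᗮ Kᗮ :=
    mapsTo_orthogonal_of_mapsTo_symm u K fun v hv => (hK u.symm hxsymm hysymm v hv).2
  refine LinearIsometryEquiv.ext fun v => ?_
  obtain ⟨k, hk, k', hk', rfl⟩ := K.exists_add_mem_mem_orthogonal v
  change u (u (k + k')) = k + k'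
  rw [map_add, map_add, (hK u hx hy k hk).1,
    apply_apply_eq_self_of_finrank_eq_one u Kᗮ hKo hKo_maps hk']

theorem mul_self_eq_one_of_det_eq_one_of_apply_eq_neg [FiniteDimensional ℝ V]
    (hV : finrank ℝ V = 3) (u : V ≃ₗᵢ[ℝ] V) (hu : u.toLinearMap.det = 1) {x : V} (hx0 : x ≠ 0)
    (hx : u x = -x) : u * u = 1 := by
  obtain ⟨y, hy0, hy⟩ := exists_ne_zero_apply_eq_self_of_det_eq_one (by rw [hV]; decide) u hu
  exact mul_self_eq_one_of_apply_eq_neg_of_apply_eq_self hV u hx0 hy0 hx hy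

end Geometry

section Twist

variable {G H : Type*} [Group G] [Group H]

def zmodPowHom {n : ℕ} [NeZero n] {z : G} (hz : z ^ n = 1) : Multiplicative (ZMod n) →* G where
  toFun k := z ^ k.toAdd.val
  map_one' := by simp
  map_mul' a b := by simp only [toAdd_mul, ZMod.val_add, ← pow_eq_pow_mod _ hz, pow_add]

def twistHom {n : ℕ} [NeZero n] (ψ : H →* G) (ε : H →* Multiplicative (ZMod n)) {z : G}
    (hz : ∀ a, Commute z a) (hzn : z ^ n = 1) : H →* G :=
  ((zmodPowHom hzn).noncommCoprod ψ fun _ a => (hz (ψ a)).pow_left _).comp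
    (ε.prod (MonoidHom.id H))

theorem twistHom_apply {n : ℕ} [NeZero n] (ψ : H →* G) (ε : H →* Multiplicative (ZMod n))
    {z : G} (hz : ∀ a, Commute z a) (hzn : z ^ n = 1) (p : H) :
    twistHom ψ ε hz hzn p = z ^ (ε p).toAdd.val * ψ p :=
  rfl

theorem twistHom_injective (ψ : H →* G) (ε : H →* Multiplicative (ZMod 2)) {z : G}
    (hz : ∀ a, Commute z a) (hz2 : z ^ 2 = 1) (hψ : Function.Injective ψ) (hzψ : z ∉ ψ.range) :
    Function.Injective (twistHom ψ ε hz hz2) := by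
  rw [injective_iff_map_eq_one]
  intro p hp
  rw [twistHom_apply] at hp
  obtain h | h : ε p = 1 ∨ ε p = .ofAdd 1 := by generalize ε p = k; revert k; decide
  · rw [h, toAdd_one, ZMod.val_zero, pow_zero, one_mul] at hp
    exact hψ (hp.trans (map_one ψ).symm)
  · rw [h, toAdd_ofAdd, ZMod.val_one, pow_one, mul_eq_one_iff_eq_inv] at hp
    exact absurd ⟨p⁻¹, by rw [map_inv, hp]⟩ hzψ

end Twist

theorem PresentedGroup.range_eq_closure {α G : Type*} [Group G] {rels : Set (FreeGroup α)}
    (φ : PresentedGroup rels →* G) :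
    φ.range = Subgroup.closure (Set.range (φ ∘ PresentedGroup.of)) := by
  rw [MonoidHom.range_eq_map, ← PresentedGroup.closure_range_of, MonoidHom.map_closure,
    ← Set.range_comp]

theorem PresentedGroup.exists_apply_eq_and_map_eq {α G K : Type*} [Group G] [Group K]
    {rels : Set (FreeGroup α)} {θ : PresentedGroup rels →* G} {A : Subgroup G}
    (hA : θ.range = A) (φ : A →* K) (ε : PresentedGroup rels →* K)
    (h : ∀ a (ha : θ (of a) ∈ A), φ ⟨θ (of a), ha⟩ = ε (of a)) (w : A) :
    ∃ p, θ p = w ∧ φ w = ε p := by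
  have hθA : ∀ q, θ q ∈ A := fun q => hA ▸ θ.mem_range.mpr ⟨q, rfl⟩
  have hφθ : φ.comp (θ.codRestrict A hθA) = ε := PresentedGroup.ext fun a => h a (hθA _)
  obtain ⟨p, hp⟩ : (w : G) ∈ θ.range := by rw [hA]; exact w.2
  refine ⟨p, hp, ?_⟩
  rw [← hφθ, MonoidHom.comp_apply, show θ.codRestrict A hθA p = w from Subtype.ext hp]

theorem exists_mulEquiv_of_injective {G G' H : Type*} [Group G] [Group G'] [Group H]
    {α : H →* G} {β : H →* G'} (hα : Function.Injective α) (hβ : Function.Injective β)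
    {A : Subgroup G} {B : Subgroup G'} (hA : α.range = A) (hB : β.range = B) :
    ∃ e : A ≃* B, ∀ h, (e ⟨α h, hA ▸ α.mem_range.mpr ⟨h, rfl⟩⟩ : G') = β h := by
  subst hA hB
  refine ⟨(MonoidHom.ofInjective hα).symm.trans (MonoidHom.ofInjective hβ), fun h => ?_⟩
  have hsymm : (MonoidHom.ofInjective hα).symm ⟨α h, α.mem_range.mpr ⟨h, rfl⟩⟩ = h := by
    rw [MulEquiv.symm_apply_eq]
    rfl
  rw [MulEquiv.trans_apply, hsymm]
  rfl

namespace PRels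

variable {m mb : ℕ} {G : Type*} [Group G]

def lift (F : Fin m → G) (hF : ∀ i : Fin m, mb ≤ (i : ℕ) → F i ^ 4 = 1) :
    PresentedGroup (PRels m mb) →* G :=
  PresentedGroup.toGroup <| by
    rintro r ⟨i, hi, rfl⟩
    rw [map_pow, FreeGroup.lift_apply_of]
    exact hF i hi

theorem lift_of (F : Fin m → G) (hF : ∀ i : Fin m, mb ≤ (i : ℕ) → F i ^ 4 = 1) (i : Fin m) :
    lift F hF (PresentedGroup.of i) = F i :=
  PresentedGroup.toGroup.of _

theorem range_lift (F : Fin m → G) (hF : ∀ i : Fin m, mb ≤ (i : ℕ) → F i ^ 4 = 1) :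
    (lift F hF).range = Subgroup.closure (Set.range F) := by
  rw [PresentedGroup.range_eq_closure]
  exact congrArg _ (congrArg _ (funext (lift_of F hF)))

def degree (m mb : ℕ) : PresentedGroup (PRels m mb) →* Multiplicative (ZMod 4) :=
  lift (fun i => .ofAdd (if (i : ℕ) < mb then 0 else 1)) fun i hi => by
    rw [if_neg (not_lt.mpr hi)]
    decide

def parity (m mb : ℕ) : PresentedGroup (PRels m mb) →* Multiplicative (ZMod 2) :=
  (ZMod.castHom (by norm_num : 2 ∣ 4) (ZMod 2)).toAddMonoidHom.toMultiplicative.comp (degree m mb)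

theorem parity_of (i : Fin m) :
    parity m mb (PresentedGroup.of i) = .ofAdd (if (i : ℕ) < mb then 0 else 1) := by
  simp only [parity, degree, MonoidHom.comp_apply, lift_of]
  split_ifs <;> rfl

theorem mul_self_ne_one_of_parity_ne_one {p : PresentedGroup (PRels m mb)}
    (hp : parity m mb p ≠ 1) : p * p ≠ 1 := by
  intro h
  have hodd : ∀ k : Multiplicative (ZMod 4),
      (ZMod.castHom (by norm_num : 2 ∣ 4) (ZMod 2)).toAddMonoidHom.toMultiplicative k ≠ 1 →
      k * k ≠ 1 := by decide
  exact hodd _ hp (by rw [← map_mul, h, map_one])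

theorem twistHom_parity_of (ψ : PresentedGroup (PRels m mb) →* G) {z : G}
    (hz : ∀ a, Commute z a) (hz2 : z ^ 2 = 1) (i : Fin m) :
    twistHom ψ (parity m mb) hz hz2 (PresentedGroup.of i) =
      if (i : ℕ) < mb then ψ (PresentedGroup.of i) else z * ψ (PresentedGroup.of i) := by
  rw [twistHom_apply, parity_of]
  split_ifs <;> simp [ZMod.val_one]

theorem twistHom_parity_apply_ne_self {V : Type*} [NormedAddCommGroup V]
    [InnerProductSpace ℝ V] [FiniteDimensional ℝ V] (hV : finrank ℝ V = 3)
    (ψ : PresentedGroup (PRels m mb) →* (V ≃ₗᵢ[ℝ] V)) (hψ : Function.Injective ψ)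
    (hψdet : ψ.range ≤ LinearIsometryEquiv.detHom.ker) {z : V ≃ₗᵢ[ℝ] V} (hz : ∀ x, z x = -x)
    {p : PresentedGroup (PRels m mb)} (hp : parity m mb p ≠ 1) {x : V} (hx : x ≠ 0) :
    twistHom ψ (parity m mb) (commute_of_forall_apply_eq_neg hz)
      (sq_eq_one_of_forall_apply_eq_neg hz) p x ≠ x := by
  intro hfix
  have hp1 : parity m mb p = .ofAdd 1 := by
    revert hp
    generalize parity m mb p = k
    revert k
    decide
  rw [twistHom_apply, hp1, toAdd_ofAdd, ZMod.val_one, pow_one, LinearIsometryEquiv.coe_mul,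
    Function.comp_apply, hz] at hfix
  have hsq := mul_self_eq_one_of_det_eq_one_of_apply_eq_neg hV (ψ p) (hψdet ⟨p, rfl⟩) hx
    (neg_eq_iff_eq_neg.mp hfix)
  exact mul_self_ne_one_of_parity_ne_one hp (hψ (by rw [map_mul, hsq, map_one]))

end PRels

theorem stmt_13_general {m : ℕ} (mb : ℕ)
    (f : Fin m → (E3 ≃ₗᵢ[ℝ] E3))
    (hrot : ∀ i, IsRotation (f i))
    (hord4 : ∀ i : Fin m, mb ≤ (i : ℕ) → orderOf (f i) = 4)
    (hfreeprod : ∀ ψ : PresentedGroup (PRels m mb) →* (E3 ≃ₗᵢ[ℝ] E3),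
      (∀ i, ψ (PresentedGroup.of i) = f i) → Function.Injective ψ)
    (zeta : E3 ≃ₗᵢ[ℝ] E3) (hzeta : ∀ x : E3, zeta x = -x)
    (g : Fin m → (E3 ≃ₗᵢ[ℝ] E3))
    (hg : ∀ i : Fin m, g i = if (i : ℕ) < mb then f i else (f i).trans zeta) :
    (∃ e : Subgroup.closure (Set.range f) ≃* Subgroup.closure (Set.range g),
      ∀ i : Fin m, e ⟨f i, Subgroup.subset_closure (Set.mem_range_self i)⟩ =
        ⟨g i, Subgroup.subset_closure (Set.mem_range_self i)⟩) ∧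
    (∀ φ : ↥(Subgroup.closure (Set.range g)) →* Multiplicative (ZMod 2),
      (∀ i : Fin m, φ ⟨g i, Subgroup.subset_closure (Set.mem_range_self i)⟩ =
        Multiplicative.ofAdd (if (i : ℕ) < mb then 0 else 1)) →
      ∀ w : Subgroup.closure (Set.range g), φ w ≠ 1 →
        ∀ x : S2, sphereMap (w : E3 ≃ₗᵢ[ℝ] E3) x ≠ x) := by
  have hf4 : ∀ i : Fin m, mb ≤ (i : ℕ) → f i ^ 4 = 1 := fun i hi =>
    hord4 i hi ▸ pow_orderOf_eq_one _
  set ψ := PRels.lift f hf4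
  have hψ : Function.Injective ψ := hfreeprod ψ (PRels.lift_of f hf4)
  have hψdet : ψ.range ≤ LinearIsometryEquiv.detHom.ker := by
    rw [PRels.range_lift, Subgroup.closure_le]
    exact Set.range_subset_iff.mpr hrot
  have hdim : finrank ℝ E3 = 3 := finrank_euclideanSpace_fin
  set θ := twistHom ψ (PRels.parity m mb) (commute_of_forall_apply_eq_neg hzeta)
    (sq_eq_one_of_forall_apply_eq_neg hzeta)
  have hθ_of : ∀ i, θ (PresentedGroup.of i) = g i := fun i => by
    rw [PRels.twistHom_parity_of, PRels.lift_of, hg]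
    split_ifs <;> rfl
  have hθ : Function.Injective θ := twistHom_injective ψ _ _ _ hψ fun hz =>
    notMem_ker_detHom_of_forall_apply_eq_neg (by rw [hdim]; decide) hzeta (hψdet hz)
  have hθrange : θ.range = Subgroup.closure (Set.range g) := by
    rw [PresentedGroup.range_eq_closure]
    exact congrArg _ (congrArg _ (funext hθ_of))
  refine ⟨?_, fun φ hφ w hw x hfix => ?_⟩
  · obtain ⟨e, he⟩ := exists_mulEquiv_of_injective hψ hθ (PRels.range_lift f hf4) hθrange
    refine ⟨e, fun i => Subtype.ext ?_⟩
    have h := he (PresentedGroup.of i)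
    rw [hθ_of] at h
    convert h using 3
    exact Subtype.ext (PRels.lift_of f hf4 i).symm
  obtain ⟨p, hp, hφp⟩ := PresentedGroup.exists_apply_eq_and_map_eq hθrange φ (PRels.parity m mb)
    (fun i _ => by rw [PRels.parity_of, ← hφ i]; exact congrArg φ (Subtype.ext (hθ_of i))) w
  exact PRels.twistHom_parity_apply_ne_self hdim ψ hψ hψdet hzeta (hφp ▸ hw)
    (ne_zero_of_mem_unit_sphere ⟨x.1, x.2⟩) (by rw [hp]; exact congrArg Subtype.val hfix)

/-- Let `σ_i = f i` (`i < mb`) be rotations of infinite order and `τ'_i = f i` (`mb ≤ i`)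
rotations of order 4 generating a group `G'` which is the (internal) free product of the
cyclic groups they generate (expressed by: any homomorphism from the abstract free product of
`mb` copies of `ℤ` and `m - mb` copies of `ℤ/4` sending the generators to the `f i` is
injective).  Let `ζ` be the antipodal map and `τ_i = ζ ∘ τ'_i`, and let `G` be the group
generated by the `σ_i` and the `τ_i`.  Then `σ_i ↦ σ_i`, `τ'_i ↦ τ_i` extends to an
isomorphism of `G'` onto `G`, and every element of `G` sent to `1` by the homomorphism
`G → ℤ/2ℤ` with `σ_i ↦ 0`, `τ_i ↦ 1` has no fixed point on `S²`. -/
theorem stmt_13 {m : ℕ} (mb : ℕ) (hmb : mb ≤ m)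
    (f : Fin m → (E3 ≃ₗᵢ[ℝ] E3))
    (hrot : ∀ i, IsRotation (f i))
    (hinf : ∀ i : Fin m, (i : ℕ) < mb → ¬ IsOfFinOrder (f i))
    (hord4 : ∀ i : Fin m, mb ≤ (i : ℕ) → orderOf (f i) = 4)
    (hfreeprod : ∀ ψ : PresentedGroup (PRels m mb) →* (E3 ≃ₗᵢ[ℝ] E3),
      (∀ i, ψ (PresentedGroup.of i) = f i) → Function.Injective ψ)
    (zeta : E3 ≃ₗᵢ[ℝ] E3) (hzeta : ∀ x : E3, zeta x = -x)
    (g : Fin m → (E3 ≃ₗᵢ[ℝ] E3))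
    (hg : ∀ i : Fin m, g i = if (i : ℕ) < mb then f i else (f i).trans zeta) :
    (∃ e : Subgroup.closure (Set.range f) ≃* Subgroup.closure (Set.range g),
      ∀ i : Fin m, e ⟨f i, Subgroup.subset_closure (Set.mem_range_self i)⟩ =
        ⟨g i, Subgroup.subset_closure (Set.mem_range_self i)⟩) ∧
    (∀ φ : ↥(Subgroup.closure (Set.range g)) →* Multiplicative (ZMod 2),
      (∀ i : Fin m, φ ⟨g i, Subgroup.subset_closure (Set.mem_range_self i)⟩ =
        Multiplicative.ofAdd (if (i : ℕ) < mb then 0 else 1)) →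
      ∀ w : Subgroup.closure (Set.range g), φ w ≠ 1 →
        ∀ x : S2, sphereMap (w : E3 ≃ₗᵢ[ℝ] E3) x ≠ x) :=
  stmt_13_general mb f hrot hord4 hfreeprod zeta hzeta g hg
end

section
/- Let (L_i, R_i), 1 ≤ i ≤ m, be a system of proper congruences on {1,…,r}. If the system is consistent, then no closed directed walk of positive length in the digraph 𝒢 contains a bad edge. -/
/-!
An edge `S → T` of `𝒢` gives the deducible subcongruence `T ⪯ S`, so along a closed walk
`v₀ → ⋯ → vₙ = v₀` every edge `vⱼ → vⱼ₊₁` also satisfies `vⱼ ⪯ v₀ = vₙ ⪯ vⱼ₊₁`. A bad edge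
`S → R_i`, say, has `L_i ⊊ S`, and then `S ⪯ R_i ⪯ L_i ⊊ S` contradicts consistency.
-/

open Set

/-- A vertex of the digraph `𝒢`: a nonempty proper subset of `{1,…,r}`. -/
def GVert {r : ℕ} (S : Set (Fin r)) : Prop := S.Nonempty ∧ S ≠ univ

/-- The edge relation of the labeled digraph `𝒢`: labels are pairs `(i, b)` with `b = true`
for the positive label `f i` and `b = false` for the inverse label `f i⁻¹`. -/
def GEdge {r m : ℕ} (L R : Fin m → Set (Fin r))
    (S : Set (Fin r)) (lab : Fin m × Bool) (T : Set (Fin r)) : Prop :=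
  GVert S ∧ GVert T ∧
    (if lab.2 then (L lab.1 ⊆ S ∧ T = R lab.1) ∨ ((L lab.1)ᶜ ⊆ S ∧ T = (R lab.1)ᶜ)
     else (R lab.1 ⊆ S ∧ T = L lab.1) ∨ ((R lab.1)ᶜ ⊆ S ∧ T = (L lab.1)ᶜ))

/-- A good edge of `𝒢`: its source is exactly the corresponding left (resp. right) set. -/
def GGoodEdge {r m : ℕ} (L R : Fin m → Set (Fin r))
    (S : Set (Fin r)) (lab : Fin m × Bool) (T : Set (Fin r)) : Prop :=
  GEdge L R S lab T ∧
    (if lab.2 then (S = L lab.1 ∧ T = R lab.1) ∨ (S = (L lab.1)ᶜ ∧ T = (R lab.1)ᶜ)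
     else (S = R lab.1 ∧ T = L lab.1) ∨ (S = (R lab.1)ᶜ ∧ T = (L lab.1)ᶜ))

/-- A bad edge of `𝒢`: an edge which is not good. -/
def GBadEdge {r m : ℕ} (L R : Fin m → Set (Fin r))
    (S : Set (Fin r)) (lab : Fin m × Bool) (T : Set (Fin r)) : Prop :=
  GEdge L R S lab T ∧ ¬ GGoodEdge L R S lab T

variable {r m : ℕ} {L R : Fin m → Set (Fin r)}

theorem SubCong.refl (A : Set (Fin r)) : SubCong L R A A :=
  .subset subset_rfl

theorem GEdge.subCong {S T : Set (Fin r)} {lab : Fin m × Bool} (h : GEdge L R S lab T) :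
    SubCong L R T S := by
  obtain ⟨-, -, h⟩ := h
  obtain ⟨i, _ | _⟩ := lab <;> simp only [Bool.false_eq_true, if_true, if_false] at h
  · rcases h with ⟨hS, rfl⟩ | ⟨hS, rfl⟩
    · exact (SubCong.lr i).trans (.subset hS)
    · exact (SubCong.lrc i).trans (.subset hS)
  · rcases h with ⟨hS, rfl⟩ | ⟨hS, rfl⟩
    · exact (SubCong.rl i).trans (.subset hS)
    · exact (SubCong.rlc i).trans (.subset hS)

theorem GBadEdge.exists_ssubset_subCong {S T : Set (Fin r)} {lab : Fin m × Bool}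
    (h : GBadEdge L R S lab T) : ∃ A, A ⊂ S ∧ SubCong L R T A := by
  obtain ⟨hedge, hgood⟩ := h
  simp only [GGoodEdge, hedge, true_and] at hgood
  obtain ⟨-, -, h⟩ := hedge
  obtain ⟨i, _ | _⟩ := lab <;> simp only [Bool.false_eq_true, if_true, if_false] at h hgood
  · rcases h with ⟨hS, rfl⟩ | ⟨hS, rfl⟩
    · exact ⟨_, hS.ssubset_of_ne fun e => hgood (.inl ⟨e.symm, rfl⟩), .lr i⟩
    · exact ⟨_, hS.ssubset_of_ne fun e => hgood (.inr ⟨e.symm, rfl⟩), .lrc i⟩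
  · rcases h with ⟨hS, rfl⟩ | ⟨hS, rfl⟩
    · exact ⟨_, hS.ssubset_of_ne fun e => hgood (.inl ⟨e.symm, rfl⟩), .rl i⟩
    · exact ⟨_, hS.ssubset_of_ne fun e => hgood (.inr ⟨e.symm, rfl⟩), .rlc i⟩

theorem SysConsistent.not_subCong_of_gBadEdge (hcons : SysConsistent L R)
    {S T : Set (Fin r)} {lab : Fin m × Bool} (h : GBadEdge L R S lab T) :
    ¬ SubCong L R S T := fun hST =>
  let ⟨A, hAS, hTA⟩ := h.exists_ssubset_subCong
  hcons S A (hST.trans hTA) hAS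

theorem subCong_of_walk {n : ℕ} {v : ℕ → Set (Fin r)} {e : ℕ → Fin m × Bool}
    (hwalk : ∀ j < n, GEdge L R (v j) (e j) (v (j + 1))) {j k : ℕ} (hjk : j ≤ k) (hk : k ≤ n) :
    SubCong L R (v k) (v j) := by
  induction k, hjk using Nat.le_induction with
  | base => exact .refl _
  | succ k _ ih => exact (hwalk k (by omega)).subCong.trans (ih (by omega))

theorem stmt_17_general {r m : ℕ} (L R : Fin m → Set (Fin r))
    (hcons : SysConsistent L R)
    (n : ℕ) (v : ℕ → Set (Fin r)) (e : ℕ → Fin m × Bool)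
    (hwalk : ∀ j < n, GEdge L R (v j) (e j) (v (j + 1)))
    (hclosed : v n = v 0) :
    ∀ j < n, ¬ GBadEdge L R (v j) (e j) (v (j + 1)) := by
  intro j hj hbad
  have hj0 : SubCong L R (v j) (v 0) := subCong_of_walk hwalk (Nat.zero_le j) hj.le
  have hnj : SubCong L R (v n) (v (j + 1)) := subCong_of_walk hwalk hj le_rfl
  rw [hclosed] at hnj
  exact hcons.not_subCong_of_gBadEdge hbad (hj0.trans hnj)

/-- **Claim 1.** If a system of proper congruences is consistent, then no closed directed walk
of positive length in the digraph `𝒢` contains a bad edge. -/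
theorem stmt_17 {r m : ℕ} (L R : Fin m → Set (Fin r)) (hproper : SysProper L R)
    (hcons : SysConsistent L R)
    (n : ℕ) (hn : 0 < n) (v : ℕ → Set (Fin r)) (e : ℕ → Fin m × Bool)
    (hwalk : ∀ j < n, GEdge L R (v j) (e j) (v (j + 1)))
    (hclosed : v n = v 0) :
    ∀ j < n, ¬ GBadEdge L R (v j) (e j) (v (j + 1)) :=
  stmt_17_general L R hcons n v e hwalk hclosed
end

section
/- Let (L_i, R_i), 1 ≤ i ≤ m, be a system of proper congruences on {1,…,r} which is weak and nonredundant. Then the undirected multigraph 𝒢₀ — whose vertices are the nonempty proper subsets of {1,…,r} and which has, for each i, one edge joining L_i with R_i and one edge joining L_i^c with R_i^c — is acyclic: it contains no closed walk of positive length whose traversed edges are pairwise distinct. -/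
open Set

/-- Incidence in the undirected multigraph `𝒢₀`: the edge indexed by `(i, false)` joins `L i`
with `R i`, and the edge indexed by `(i, true)` joins `(L i)ᶜ` with `(R i)ᶜ`. -/
def G0Joins {r m : ℕ} (L R : Fin m → Set (Fin r))
    (E : Fin m × Bool) (u w : Set (Fin r)) : Prop :=
  if E.2 then (u = (L E.1)ᶜ ∧ w = (R E.1)ᶜ) ∨ (u = (R E.1)ᶜ ∧ w = (L E.1)ᶜ)
  else (u = L E.1 ∧ w = R E.1) ∨ (u = R E.1 ∧ w = L E.1)


/-!
Every edge of `𝒢₀` carries a deducible congruence between its endpoints, so a walk deduces a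
congruence between its ends. If a cycle with distinct edges uses both edges `(i, false)` and
`(i, true)`, the walk from one to the other connects `L i` with `(L i)ᶜ`, against weakness.
Otherwise the first edge of the cycle is the only one coming from its congruence `i`, and the
rest of the cycle deduces `(L i, R i)` from the other congruences, against nonredundancy; a cycle
of length one is a loop, forcing `L i = R i`.
-/

section G0Joins

variable {r m : ℕ} {L R : Fin m → Set (Fin r)} {S : Set (Set (Fin r) × Set (Fin r))}
  {E : Fin m × Bool} {u w : Set (Fin r)}

theorem G0Joins.symm (h : G0Joins L R E u w) : G0Joins L R E w u := by
  unfold G0Joins at *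
  split_ifs at * <;> tauto

theorem G0Joins.congDed (h : G0Joins L R E u w) (hE : (L E.1, R E.1) ∈ S) :
    CongDed S u w := by
  unfold G0Joins at h
  split_ifs at h
  · rcases h with ⟨rfl, rfl⟩ | ⟨rfl, rfl⟩
    · exact .compl (.base hE)
    · exact .symm (.compl (.base hE))
  · rcases h with ⟨rfl, rfl⟩ | ⟨rfl, rfl⟩
    · exact .base hE
    · exact .symm (.base hE)

theorem G0Joins.congDed_left (h : G0Joins L R E u w) (hE : (L E.1, R E.1) ∈ S) :
    CongDed S u (bif E.2 then (L E.1)ᶜ else L E.1) := by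
  have hLR : CongDed S (L E.1) (R E.1) := .base hE
  unfold G0Joins at h
  split_ifs at h with hb <;> simp only [hb, cond_true, cond_false]
  · rcases h with ⟨rfl, -⟩ | ⟨rfl, -⟩
    · exact .compl (.trans hLR hLR.symm)
    · exact .compl hLR.symm
  · rcases h with ⟨rfl, -⟩ | ⟨rfl, -⟩
    · exact .trans hLR hLR.symm
    · exact hLR.symm

theorem G0Joins.congDed_pair (h : G0Joins L R E u w) (huw : CongDed S u w) :
    CongDed S (L E.1) (R E.1) := by
  unfold G0Joins at h
  split_ifs at h
  · rcases h with ⟨rfl, rfl⟩ | ⟨rfl, rfl⟩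
    · simpa only [compl_compl] using huw.compl
    · simpa only [compl_compl] using huw.symm.compl
  · rcases h with ⟨rfl, rfl⟩ | ⟨rfl, rfl⟩
    · exact huw
    · exact huw.symm

theorem G0Joins.left_eq_right_of_loop (h : G0Joins L R E u u) : L E.1 = R E.1 := by
  unfold G0Joins at h
  split_ifs at h
  · rcases h with ⟨rfl, h⟩ | ⟨h, rfl⟩ <;> exact compl_injective (by rw [← h])
  · rcases h with ⟨rfl, h⟩ | ⟨h, rfl⟩ <;> exact h

theorem G0Joins.congDed_compl_of_opposite {E' : Fin m × Bool} {u' w' : Set (Fin r)}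
    (hu : G0Joins L R E u u') (hw : G0Joins L R E' w' w) (hidx : E'.1 = E.1)
    (hb : E'.2 ≠ E.2) (hE : (L E.1, R E.1) ∈ S) (huw : CongDed S u w) :
    CongDed S (L E.1) (L E.1)ᶜ := by
  have hu' := hu.congDed_left hE
  have hw' := hw.symm.congDed_left (hidx ▸ hE)
  rw [hidx] at hw'
  have hchain := (hu'.symm.trans huw).trans hw'
  cases hE2 : E.2 <;> cases hE'2 : E'.2 <;> simp only [hE2, hE'2, ne_eq, not_true_eq_false] at hb hchain ⊢
  · simpa only [cond_true, cond_false] using hchain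
  · simpa only [compl_compl, cond_true, cond_false] using hchain.compl

end G0Joins

theorem CongDed.of_chain {r : ℕ} {S : Set (Set (Fin r) × Set (Fin r))} (v : ℕ → Set (Fin r))
    {a b : ℕ} (hab : a < b) (h : ∀ j, a ≤ j → j < b → CongDed S (v j) (v (j + 1))) :
    CongDed S (v a) (v b) := by
  induction b, hab using Nat.le_induction with
  | base => exact h a le_rfl a.lt_succ_self
  | succ b hab ih =>
    exact .trans (ih fun j h1 h2 => h j h1 (by omega)) (h b (by omega) b.lt_succ_self)

theorem stmt_18_general {r m : ℕ} (L R : Fin m → Set (Fin r))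
    (hweak : SysWeak L R) (hnonred : SysNonredundant L R) :
    ¬ ∃ (n : ℕ) (v : ℕ → Set (Fin r)) (e : ℕ → Fin m × Bool),
        0 < n ∧
        (∀ j < n, G0Joins L R (e j) (v j) (v (j + 1))) ∧
        v n = v 0 ∧
        (∀ j < n, ∀ k < n, j ≠ k → e j ≠ e k) := by
  rintro ⟨n, v, e, hn, hjoin, hclose, hdist⟩
  have h0 := hjoin 0 hn
  by_cases hpair : ∃ k < n, (e k).1 = (e 0).1 ∧ (e k).2 ≠ (e 0).2
  · obtain ⟨k, hk, hidx, hb⟩ := hpair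
    have hwalk := CongDed.of_chain (S := {p | ∃ i, p = (L i, R i)}) v k.succ_pos
      fun j _ hj => (hjoin j (by omega)).congDed ⟨_, rfl⟩
    exact hweak _ (h0.congDed_compl_of_opposite (hjoin k hk) hidx hb ⟨_, rfl⟩ hwalk)
  push Not at hpair
  obtain rfl | hn1 := (Nat.one_le_iff_ne_zero.mpr hn.ne').eq_or_lt
  · exact hnonred.2 _ (G0Joins.left_eq_right_of_loop (hclose ▸ h0))
  have havoid : ∀ j, 1 ≤ j → j < n → (e j).1 ≠ (e 0).1 := fun j h1 h2 hj =>
    hdist j h2 0 hn (by omega) (Prod.ext hj (hpair j h2 hj))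
  have hrest := CongDed.of_chain (S := {p | ∃ j, j ≠ (e 0).1 ∧ p = (L j, R j)}) v hn1
    fun j h1 h2 =>
    (hjoin j h2).congDed ⟨_, havoid j h1 h2, rfl⟩
  rw [hclose] at hrest
  exact hnonred.1 _ (h0.congDed_pair hrest.symm)

/-- **Claim 2.** If a system of proper congruences is weak and nonredundant, then the
undirected multigraph `𝒢₀` is acyclic: it has no closed walk of positive length whose
traversed edges are pairwise distinct. -/
theorem stmt_18 {r m : ℕ} (L R : Fin m → Set (Fin r)) (hproper : SysProper L R)
    (hweak : SysWeak L R) (hnonred : SysNonredundant L R) :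
    ¬ ∃ (n : ℕ) (v : ℕ → Set (Fin r)) (e : ℕ → Fin m × Bool),
        0 < n ∧
        (∀ j < n, G0Joins L R (e j) (v j) (v (j + 1))) ∧
        v n = v 0 ∧
        (∀ j < n, ∀ k < n, j ≠ k → e j ≠ e k) :=
  stmt_18_general L R hweak hnonred
end
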